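/- arXiv:1811.03070 — 3 statements merged into one kernel-verified Lean document; each statement's English description precedes it below -/
import Mathlib

section
/- Let f_i(x; ε, δ) be the invariant density of F(x; ε, δ). For every d > 0, f_i(x; ε, δ) → 1 as ε, δ → 0, uniformly on [d, 1−d]; that is, for every μ > 0 there exists ω > 0 such that 0 < ε, δ < ω implies sup_{x ∈ [d, 1−d]} |f_i(x; ε, δ) − 1| < μ. -/
open MeasureTheory Set Filter

/-- The piecewise linear map `F(·; ε, δ)` of Example 2.3 on `[0,1]`. -/
noncomputable def Fpiece (ε δ y : ℝ) : ℝ :=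
  if y < 1 / 4 then (4 + ε) * y
  else if y < 1 / 2 then (-2 - ε) * y + (3 + ε) / 2
  else if y < 3 / 4 then (-2 - δ) * y + (3 + δ) / 2
  else (4 + δ) * y - (3 + δ)

/-- The shift-periodic map `F(x; ε, δ) = F({x}; ε, δ) + ⌊x⌋` on `ℝ`. -/
noncomputable def Fmap (ε δ x : ℝ) : ℝ := (⌊x⌋ : ℝ) + Fpiece ε δ (Int.fract x)

/-- The restricted map `F_r(x; ε, δ) = {F(x; ε, δ)}`. -/
noncomputable def FrMap (ε δ x : ℝ) : ℝ := Int.fract (Fmap ε δ x)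

/-- The derivative of `F_r(·; ε, δ)` (defined by the slopes of the linear pieces). -/
noncomputable def FrSlope (ε δ x : ℝ) : ℝ :=
  if Int.fract x < 1 / 4 then 4 + ε
  else if Int.fract x < 1 / 2 then -2 - ε
  else if Int.fract x < 3 / 4 then -2 - δ
  else 4 + δ

/-- The cumulative derivative `β(x, n) = ∏_{k<n} F_r'(F_r^k(x))`. -/
noncomputable def cumDeriv (ε δ x : ℝ) (n : ℕ) : ℝ :=
  ∏ k ∈ Finset.range n, FrSlope ε δ ((FrMap ε δ)^[k] x)

/-- `β^L(c, n) = lim_{x → c⁺} β(x, n)`. -/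
noncomputable def cumDerivL (ε δ c : ℝ) (n : ℕ) : ℝ :=
  limUnder (nhdsWithin c (Set.Ioi c)) (fun x => cumDeriv ε δ x n)

/-- `β^R(c, n) = lim_{x → c⁻} β(x, n)`. -/
noncomputable def cumDerivR (ε δ c : ℝ) (n : ℕ) : ℝ :=
  limUnder (nhdsWithin c (Set.Iio c)) (fun x => cumDeriv ε δ x n)

/-- The indicator `𝟙(x; A, B)`: equals `1` iff (`x ∈ [0,A]` and `B > 0`) or
(`x ∈ [A,1]` and `B < 0`). -/
noncomputable def goraInd (x A B : ℝ) : ℝ :=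
  if (x ∈ Set.Icc 0 A ∧ 0 < B) ∨ (x ∈ Set.Icc A 1 ∧ B < 0) then 1 else 0

/-- The Góra-type series formula for the invariant density of `F_r(·; ε, δ)`,
with normalisation `K` and constants `D₁^L, D₂^L, D₁^R, D₂^R`;
the spikes are at `c₁ = 1/4` and `c₂ = 3/4`. -/
noncomputable def goraDensity (K D1L D2L D1R D2R ε δ x : ℝ) : ℝ :=
  K⁻¹ * (1
    + D1L * ∑' n : ℕ,
        goraInd x ((FrMap ε δ)^[n + 1] (1 / 4)) (-cumDerivL ε δ (1 / 4) (n + 1))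
          / |cumDerivL ε δ (1 / 4) (n + 1)|
    + D2L * ∑' n : ℕ,
        goraInd x ((FrMap ε δ)^[n + 1] (3 / 4)) (-cumDerivL ε δ (3 / 4) (n + 1))
          / |cumDerivL ε δ (3 / 4) (n + 1)|
    + D1R * ∑' n : ℕ,
        goraInd x ((FrMap ε δ)^[n + 1] (1 / 4)) (cumDerivR ε δ (1 / 4) (n + 1))
          / |cumDerivR ε δ (1 / 4) (n + 1)|
    + D2R * ∑' n : ℕ,
        goraInd x ((FrMap ε δ)^[n + 1] (3 / 4)) (cumDerivR ε δ (3 / 4) (n + 1))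
          / |cumDerivR ε δ (3 / 4) (n + 1)|)

/-- The filter of `(ε, δ) → (0⁺, 0⁺)`. -/
def zeroPlusPair : Filter (ℝ × ℝ) :=
  (nhdsWithin 0 (Set.Ioi 0)) ×ˢ (nhdsWithin 0 (Set.Ioi 0))

section GoraAux

variable {ε δ : ℝ}

lemma fract_eq_sub {x : ℝ} (k : ℤ) (h1 : (k : ℝ) ≤ x) (h2 : x < k + 1) :
    Int.fract x = x - k := by
  have : ⌊x⌋ = k := Int.floor_eq_iff.mpr ⟨h1, h2⟩
  rw [Int.fract, this]

lemma frMap_eq (ε δ x : ℝ) : FrMap ε δ x = Int.fract (Fpiece ε δ (Int.fract x)) := by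
  rw [FrMap, Fmap, Int.fract_intCast_add]

lemma Fpiece1 {y : ℝ} (h : y < 1/4) : Fpiece ε δ y = (4 + ε) * y := by
  rw [Fpiece]; rw [if_pos (by linarith : y < 1 / 4)]

lemma Fpiece2 {y : ℝ} (h1 : 1/4 ≤ y) (h2 : y < 1/2) :
    Fpiece ε δ y = (-2 - ε) * y + (3 + ε) / 2 := by
  rw [Fpiece, if_neg (by push_neg; linarith), if_pos (by linarith : y < 1 / 2)]

lemma Fpiece3 {y : ℝ} (h1 : 1/2 ≤ y) (h2 : y < 3/4) :
    Fpiece ε δ y = (-2 - δ) * y + (3 + δ) / 2 := by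
  rw [Fpiece, if_neg (by push_neg; linarith), if_neg (by push_neg; linarith),
    if_pos (by linarith : y < 3 / 4)]

lemma Fpiece4 {y : ℝ} (h1 : 3/4 ≤ y) : Fpiece ε δ y = (4 + δ) * y - (3 + δ) := by
  rw [Fpiece, if_neg (by push_neg; linarith), if_neg (by push_neg; linarith),
    if_neg (by push_neg; linarith)]

lemma FrSlope1 {x : ℝ} (h : Int.fract x < 1/4) : FrSlope ε δ x = 4 + ε := by
  rw [FrSlope]; rw [if_pos (by linarith : Int.fract x < 1 / 4)]

lemma FrSlope2 {x : ℝ} (h1 : 1/4 ≤ Int.fract x) (h2 : Int.fract x < 1/2) :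
    FrSlope ε δ x = -2 - ε := by
  rw [FrSlope, if_neg (by push_neg; linarith), if_pos (by linarith : Int.fract x < 1 / 2)]

lemma FrSlope3 {x : ℝ} (h1 : 1/2 ≤ Int.fract x) (h2 : Int.fract x < 3/4) :
    FrSlope ε δ x = -2 - δ := by
  rw [FrSlope, if_neg (by push_neg; linarith), if_neg (by push_neg; linarith),
    if_pos (by linarith : Int.fract x < 3 / 4)]

lemma FrSlope4 {x : ℝ} (h1 : 3/4 ≤ Int.fract x) : FrSlope ε δ x = 4 + δ := by
  rw [FrSlope, if_neg (by push_neg; linarith), if_neg (by push_neg; linarith),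
    if_neg (by push_neg; linarith)]

lemma two_le_abs_frSlope (hε : 0 ≤ ε) (hδ : 0 ≤ δ) (x : ℝ) : 2 ≤ |FrSlope ε δ x| := by
  rw [FrSlope]
  split_ifs <;>
    first
      | (rw [abs_of_nonneg (by linarith)]; linarith)
      | (rw [abs_of_nonpos (by linarith)]; linarith)

lemma two_pow_le_abs_prod (hε : 0 ≤ ε) (hδ : 0 ≤ δ) (g : ℕ → ℝ) (j : ℕ) :
    (2 : ℝ) ^ j ≤ |∏ k ∈ Finset.range j, FrSlope ε δ (g k)| := by
  rw [Finset.abs_prod]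
  calc (2 : ℝ) ^ j = ∏ _k ∈ Finset.range j, (2 : ℝ) := by
        rw [Finset.prod_const, Finset.card_range]
    _ ≤ _ := Finset.prod_le_prod (fun k _ => by norm_num)
        (fun k _ => two_le_abs_frSlope hε hδ _)

lemma two_pow_le_abs_cumDeriv (hε : 0 ≤ ε) (hδ : 0 ≤ δ) (y : ℝ) (n : ℕ) :
    (2 : ℝ) ^ n ≤ |cumDeriv ε δ y n| := by
  rw [cumDeriv]; exact two_pow_le_abs_prod hε hδ _ n

lemma cumDeriv_add (ε δ y : ℝ) (N j : ℕ) :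
    cumDeriv ε δ y (N + j)
      = cumDeriv ε δ y N * ∏ k ∈ Finset.range j, FrSlope ε δ ((FrMap ε δ)^[N + k] y) := by
  rw [cumDeriv, cumDeriv, Finset.prod_range_add]

lemma cumDeriv_succ (ε δ y : ℝ) (n : ℕ) :
    cumDeriv ε δ y (n + 1) = cumDeriv ε δ y n * FrSlope ε δ ((FrMap ε δ)^[n] y) := by
  rw [cumDeriv, cumDeriv, Finset.prod_range_succ]

lemma goraInd_nonneg (x A B : ℝ) : 0 ≤ goraInd x A B := by
  rw [goraInd]; split_ifs <;> norm_num

lemma goraInd_le_one (x A B : ℝ) : goraInd x A B ≤ 1 := by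
  rw [goraInd]; split_ifs <;> norm_num

end GoraAux
section GoraB

variable {ε δ : ℝ}

lemma exists_floor_const_right {m : ℝ} (hm : m ≠ 0) (b p η : ℝ) (hη : 0 < η) :
    ∃ η', 0 < η' ∧ η' ≤ η ∧ ∃ k : ℤ, ∀ y ∈ Set.Ioo p (p + η'), ⌊m * y + b⌋ = k := by
  have hfl := Int.floor_le (m * p + b)
  have hfu := Int.lt_floor_add_one (m * p + b)
  rcases hm.lt_or_gt with hneg | hpos
  · by_cases hz : Int.fract (m * p + b) = 0
    · have hz' : ((⌊m * p + b⌋ : ℤ) : ℝ) = m * p + b := by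
        have := Int.self_sub_floor (m * p + b)
        rw [hz] at this; linarith
      have hmpos : (0:ℝ) < -m := by linarith
      refine ⟨min η (1 / (-m)), lt_min hη (by positivity), min_le_left _ _, ⌊m * p + b⌋ - 1,
        fun y hy => ?_⟩
      have hy2 : y < p + 1 / (-m) := lt_of_lt_of_le hy.2 (by
        have := min_le_right η (1 / (-m)); linarith)
      have hmy1 : m * y + b < m * p + b := by nlinarith [hy.1]
      have hmy2 : m * p + b - 1 < m * y + b := by
        have h1 : y - p < 1 / (-m) := by linarith
        have h2 : (y - p) * (-m) < 1 := (lt_div_iff₀ hmpos).mp h1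
        nlinarith
      rw [Int.floor_eq_iff]
      push_cast
      constructor <;> linarith
    · have hfr : 0 < Int.fract (m * p + b) :=
        lt_of_le_of_ne (Int.fract_nonneg _) (Ne.symm hz)
      have hmpos : (0:ℝ) < -m := by linarith
      refine ⟨min η (Int.fract (m * p + b) / (-m)), lt_min hη (by positivity), min_le_left _ _,
        ⌊m * p + b⌋, fun y hy => ?_⟩
      have hy2 : y < p + Int.fract (m * p + b) / (-m) := lt_of_lt_of_le hy.2 (by
        have := min_le_right η (Int.fract (m * p + b) / (-m)); linarith)
      have hmy1 : m * y + b < m * p + b := by nlinarith [hy.1]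
      have hmy2 : m * p + b - Int.fract (m * p + b) < m * y + b := by
        have h2 : (-m) * (y - p) < Int.fract (m * p + b) := by
          have h1 : y - p < Int.fract (m * p + b) / (-m) := by linarith
          calc (-m) * (y - p) < (-m) * (Int.fract (m * p + b) / (-m)) := by
                apply mul_lt_mul_of_pos_left h1 (by linarith)
            _ = Int.fract (m * p + b) := by field_simp
        nlinarith
      have hself : m * p + b - Int.fract (m * p + b) = (⌊m * p + b⌋ : ℝ) := by
        have := Int.self_sub_fract (m * p + b); linarith
      rw [Int.floor_eq_iff]
      constructor
      · linarith [hself ▸ hmy2]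
      · push_cast; linarith
  · refine ⟨min η ((1 - Int.fract (m * p + b)) / m), ?_, min_le_left _ _,
      ⌊m * p + b⌋, fun y hy => ?_⟩
    · have : 0 < 1 - Int.fract (m * p + b) := by linarith [Int.fract_lt_one (m * p + b)]
      positivity
    · have hy2 : y < p + (1 - Int.fract (m * p + b)) / m := lt_of_lt_of_le hy.2 (by
        have := min_le_right η ((1 - Int.fract (m * p + b)) / m); linarith)
      have hmy1 : m * p + b < m * y + b := by nlinarith [hy.1]
      have hmy2 : m * y + b < m * p + b + (1 - Int.fract (m * p + b)) := by
        have h1 : y - p < (1 - Int.fract (m * p + b)) / m := by linarith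
        have h2 : m * (y - p) < 1 - Int.fract (m * p + b) := by
          calc m * (y - p) < m * ((1 - Int.fract (m * p + b)) / m) :=
                mul_lt_mul_of_pos_left h1 hpos
            _ = 1 - Int.fract (m * p + b) := by field_simp
        nlinarith
      have hself : m * p + b - Int.fract (m * p + b) = (⌊m * p + b⌋ : ℝ) := by
        have := Int.self_sub_fract (m * p + b); linarith
      rw [Int.floor_eq_iff]
      constructor
      · linarith
      · push_cast; linarith

lemma exists_floor_const_left {m : ℝ} (hm : m ≠ 0) (b p η : ℝ) (hη : 0 < η) :
    ∃ η', 0 < η' ∧ η' ≤ η ∧ ∃ k : ℤ, ∀ y ∈ Set.Ioo (p - η') p, ⌊m * y + b⌋ = k := by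
  obtain ⟨η', h1, h2, k, hk⟩ := exists_floor_const_right (m := -m) (by simpa using hm)
    b (-p) η hη
  refine ⟨η', h1, h2, k, fun y hy => ?_⟩
  have : -y ∈ Set.Ioo (-p) (-p + η') := by
    constructor <;> [linarith [hy.2]; linarith [hy.1]]
  have := hk (-y) this
  convert this using 2
  ring
section GoraC

variable {ε δ : ℝ}

lemma exists_fmap_affine_right (hε : 0 < ε) (hδ : 0 < δ) (p : ℝ) :
    ∃ η m b, 0 < η ∧ 2 ≤ |m| ∧ ∀ y ∈ Set.Ioo p (p + η),
      Fmap ε δ y = m * y + b ∧ FrSlope ε δ y = m := by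
  set t := Int.fract p with hts
  have ht0 : 0 ≤ t := Int.fract_nonneg p
  have ht1 : t < 1 := Int.fract_lt_one p
  have hfp : p - ⌊p⌋ = t := Int.self_sub_floor p
  have key : ∀ η₀ : ℝ, 0 < η₀ → η₀ ≤ 1 - t → ∀ y ∈ Set.Ioo p (p + η₀),
      (Int.fract y = y - ⌊p⌋ ∧ (⌊y⌋ : ℝ) = (⌊p⌋ : ℝ)) ∧ t < Int.fract y ∧ Int.fract y < t + η₀ := by
    intro η₀ h1 h2 y hy
    have h3 : (⌊p⌋ : ℝ) ≤ y := le_trans (Int.floor_le p) (le_of_lt hy.1)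
    have h4 : y < ⌊p⌋ + 1 := by
      have := hy.2; linarith
    have h6 : ⌊y⌋ = ⌊p⌋ := Int.floor_eq_iff.mpr ⟨h3, by push_cast; linarith⟩
    have h5 := fract_eq_sub ⌊p⌋ h3 (by push_cast; linarith)
    refine ⟨⟨h5, by rw [h6]⟩, ?_, ?_⟩ <;> rw [h5] <;> [linarith [hy.1]; linarith [hy.2]]
  rcases lt_or_ge t (1/4) with hb | hb'
  · refine ⟨1/4 - t, 4 + ε, (⌊p⌋ : ℝ) * (-3 - ε), by linarith,
      by rw [abs_of_nonneg (by linarith)]; linarith, fun y hy => ?_⟩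
    obtain ⟨⟨hf, hfl2⟩, hl, hu⟩ := key _ (by linarith) (by linarith) y hy
    constructor
    · rw [Fmap, Fpiece1 (by rw [hf]; linarith [hu])]
      rw [hf, hfl2]; ring
    · rw [FrSlope1 (by rw [hf]; linarith [hu])]
  rcases lt_or_ge t (1/2) with hb2 | hb2'
  · refine ⟨1/2 - t, -2 - ε, (⌊p⌋ : ℝ) * (3 + ε) + (3 + ε) / 2, by linarith,
      by rw [abs_of_nonpos (by linarith)]; linarith, fun y hy => ?_⟩
    obtain ⟨⟨hf, hfl2⟩, hl, hu⟩ := key _ (by linarith) (by linarith) y hy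
    constructor
    · rw [Fmap, Fpiece2 (by rw [hf]; linarith) (by rw [hf]; linarith [hu])]
      rw [hf, hfl2]; ring
    · rw [FrSlope2 (by rw [hf]; linarith) (by rw [hf]; linarith [hu])]
  rcases lt_or_ge t (3/4) with hb3 | hb3'
  · refine ⟨3/4 - t, -2 - δ, (⌊p⌋ : ℝ) * (3 + δ) + (3 + δ) / 2, by linarith,
      by rw [abs_of_nonpos (by linarith)]; linarith, fun y hy => ?_⟩
    obtain ⟨⟨hf, hfl2⟩, hl, hu⟩ := key _ (by linarith) (by linarith) y hy
    constructor
    · rw [Fmap, Fpiece3 (by rw [hf]; linarith) (by rw [hf]; linarith [hu])]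
      rw [hf, hfl2]; ring
    · rw [FrSlope3 (by rw [hf]; linarith) (by rw [hf]; linarith [hu])]
  · refine ⟨1 - t, 4 + δ, (⌊p⌋ : ℝ) * (-3 - δ) - (3 + δ), by linarith,
      by rw [abs_of_nonneg (by linarith)]; linarith, fun y hy => ?_⟩
    obtain ⟨⟨hf, hfl2⟩, hl, hu⟩ := key _ (by linarith) (by linarith) y hy
    constructor
    · rw [Fmap, Fpiece4 (by rw [hf]; linarith)]
      rw [hf, hfl2]; ring
    · rw [FrSlope4 (by rw [hf]; linarith)]

lemma exists_fmap_affine_left (hε : 0 < ε) (hδ : 0 < δ) (p : ℝ) :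
    ∃ η m b, 0 < η ∧ 2 ≤ |m| ∧ ∀ y ∈ Set.Ioo (p - η) p,
      Fmap ε δ y = m * y + b ∧ FrSlope ε δ y = m := by
  set t := Int.fract p with hts
  have ht0 : 0 ≤ t := Int.fract_nonneg p
  have ht1 : t < 1 := Int.fract_lt_one p
  have hfp : p - ⌊p⌋ = t := Int.self_sub_floor p
  rcases eq_or_lt_of_le ht0 with hz | htpos
  · -- t = 0 : p = ⌊p⌋; left side lands in branch 4 shifted down by 1
    have hpz : (⌊p⌋ : ℝ) = p := by linarith
    have key : ∀ y ∈ Set.Ioo (p - 1/4) p, Int.fract y = y - ⌊p⌋ + 1 ∧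
        3/4 ≤ Int.fract y ∧ Int.fract y < 1 := by
      intro y hy
      have h3 : ((⌊p⌋ - 1 : ℤ) : ℝ) ≤ y := by push_cast; linarith [hy.1]
      have h4 : y < ((⌊p⌋ - 1 : ℤ) : ℝ) + 1 := by push_cast; linarith [hy.2]
      have h5 := fract_eq_sub (⌊p⌋ - 1) h3 h4
      push_cast at h5
      refine ⟨by rw [h5]; ring, by rw [h5]; linarith [hy.1], by rw [h5]; linarith [hy.2]⟩
    refine ⟨1/4, 4 + δ, (⌊p⌋ : ℝ) * (-3 - δ), by norm_num,
      by rw [abs_of_nonneg (by linarith)]; linarith, fun y hy => ?_⟩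
    obtain ⟨hf, hl, hu⟩ := key y hy
    have hfl : ⌊y⌋ = ⌊p⌋ - 1 := by
      have h3 : ((⌊p⌋ - 1 : ℤ) : ℝ) ≤ y := by push_cast; linarith [hy.1]
      have h4 : y < ((⌊p⌋ - 1 : ℤ) : ℝ) + 1 := by push_cast; linarith [hy.2]
      exact Int.floor_eq_iff.mpr ⟨h3, h4⟩
    constructor
    · rw [Fmap, Fpiece4 hl, hf, hfl]
      push_cast; ring
    · rw [FrSlope4 hl]
  · -- t > 0
    have key : ∀ η₀ : ℝ, 0 < η₀ → η₀ ≤ t → ∀ y ∈ Set.Ioo (p - η₀) p,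
        (Int.fract y = y - ⌊p⌋ ∧ (⌊y⌋ : ℝ) = (⌊p⌋ : ℝ)) ∧ t - η₀ < Int.fract y ∧ Int.fract y < t := by
      intro η₀ h1 h2 y hy
      have h3 : (⌊p⌋ : ℝ) ≤ y := by linarith [hy.1]
      have h4 : y < ⌊p⌋ + 1 := by linarith [hy.2, Int.lt_floor_add_one p]
      have h6 : ⌊y⌋ = ⌊p⌋ := Int.floor_eq_iff.mpr ⟨h3, by push_cast; linarith⟩
      have h5 := fract_eq_sub ⌊p⌋ h3 (by push_cast; linarith)
      refine ⟨⟨h5, by rw [h6]⟩, ?_, ?_⟩ <;> rw [h5] <;> [linarith [hy.1]; linarith [hy.2]]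
    rcases le_or_gt t (1/4) with hb | hb'
    · refine ⟨t, 4 + ε, (⌊p⌋ : ℝ) * (-3 - ε), htpos,
        by rw [abs_of_nonneg (by linarith)]; linarith, fun y hy => ?_⟩
      obtain ⟨⟨hf, hfl2⟩, hl, hu⟩ := key _ htpos (le_refl _) y hy
      constructor
      · rw [Fmap, Fpiece1 (by rw [hf]; linarith)]
        rw [hf, hfl2]; ring
      · rw [FrSlope1 (by rw [hf]; linarith)]
    rcases le_or_gt t (1/2) with hb2 | hb2'
    · refine ⟨t - 1/4, -2 - ε, (⌊p⌋ : ℝ) * (3 + ε) + (3 + ε) / 2, by linarith,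
        by rw [abs_of_nonpos (by linarith)]; linarith, fun y hy => ?_⟩
      obtain ⟨⟨hf, hfl2⟩, hl, hu⟩ := key _ (by linarith) (by linarith) y hy
      constructor
      · rw [Fmap, Fpiece2 (by rw [hf]; linarith [hl]) (by rw [hf]; linarith)]
        rw [hf, hfl2]; ring
      · rw [FrSlope2 (by rw [hf]; linarith [hl]) (by rw [hf]; linarith)]
    rcases le_or_gt t (3/4) with hb3 | hb3'
    · refine ⟨t - 1/2, -2 - δ, (⌊p⌋ : ℝ) * (3 + δ) + (3 + δ) / 2, by linarith,
        by rw [abs_of_nonpos (by linarith)]; linarith, fun y hy => ?_⟩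
      obtain ⟨⟨hf, hfl2⟩, hl, hu⟩ := key _ (by linarith) (by linarith) y hy
      constructor
      · rw [Fmap, Fpiece3 (by rw [hf]; linarith [hl]) (by rw [hf]; linarith)]
        rw [hf, hfl2]; ring
      · rw [FrSlope3 (by rw [hf]; linarith [hl]) (by rw [hf]; linarith)]
    · refine ⟨t - 3/4, 4 + δ, (⌊p⌋ : ℝ) * (-3 - δ) - (3 + δ), by linarith,
        by rw [abs_of_nonneg (by linarith)]; linarith, fun y hy => ?_⟩
      obtain ⟨⟨hf, hfl2⟩, hl, hu⟩ := key _ (by linarith) (by linarith) y hy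
      constructor
      · rw [Fmap, Fpiece4 (by rw [hf]; linarith [hl])]
        rw [hf, hfl2]; ring
      · rw [FrSlope4 (by rw [hf]; linarith [hl])]

lemma exists_affine_right (hε : 0 < ε) (hδ : 0 < δ) (p : ℝ) :
    ∃ η m b, 0 < η ∧ 2 ≤ |m| ∧ ∀ y ∈ Set.Ioo p (p + η),
      FrMap ε δ y = m * y + b ∧ FrSlope ε δ y = m := by
  obtain ⟨η, m, b, hη, hm, H⟩ := exists_fmap_affine_right hε hδ p
  have hm0 : m ≠ 0 := by intro h; rw [h] at hm; simp at hm; linarith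
  obtain ⟨η', h1, h2, k, hk⟩ := exists_floor_const_right hm0 b p η hη
  refine ⟨η', m, b - k, h1, hm, fun y hy => ?_⟩
  have hy' : y ∈ Set.Ioo p (p + η) := ⟨hy.1, lt_of_lt_of_le hy.2 (by linarith)⟩
  obtain ⟨hFm, hSl⟩ := H y hy'
  refine ⟨?_, hSl⟩
  rw [FrMap, hFm, Int.fract]
  rw [show ⌊m * y + b⌋ = k from hk y hy]
  ring

lemma exists_affine_left (hε : 0 < ε) (hδ : 0 < δ) (p : ℝ) :
    ∃ η m b, 0 < η ∧ 2 ≤ |m| ∧ ∀ y ∈ Set.Ioo (p - η) p,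
      FrMap ε δ y = m * y + b ∧ FrSlope ε δ y = m := by
  obtain ⟨η, m, b, hη, hm, H⟩ := exists_fmap_affine_left hε hδ p
  have hm0 : m ≠ 0 := by intro h; rw [h] at hm; simp at hm; linarith
  obtain ⟨η', h1, h2, k, hk⟩ := exists_floor_const_left hm0 b p η hη
  refine ⟨η', m, b - k, h1, hm, fun y hy => ?_⟩
  have hy' : y ∈ Set.Ioo (p - η) p := ⟨lt_of_le_of_lt (by linarith) hy.1, hy.2⟩
  obtain ⟨hFm, hSl⟩ := H y hy'
  refine ⟨?_, hSl⟩
  rw [FrMap, hFm, Int.fract]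
  rw [show ⌊m * y + b⌋ = k from hk y hy]
  ring

end GoraC
section GoraD

variable {ε δ : ℝ}

lemma exists_germ_right (hε : 0 < ε) (hδ : 0 < δ) (c : ℝ) (n : ℕ) :
    ∃ η m b β, 0 < η ∧ m ≠ 0 ∧ ∀ y ∈ Set.Ioo c (c + η),
      (FrMap ε δ)^[n] y = m * y + b ∧ cumDeriv ε δ y n = β := by
  induction n with
  | zero =>
    exact ⟨1, 1, 0, 1, one_pos, one_ne_zero, fun y _ =>
      ⟨by simp, by simp [cumDeriv]⟩⟩
  | succ n ih =>
    obtain ⟨η, m, b, β, hη, hm, H⟩ := ih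
    rcases hm.lt_or_gt with hneg | hpos
    · obtain ⟨η₁, m₁, b₁, hη₁, hm₁, H₁⟩ := exists_affine_left hε hδ (m * c + b)
      have hm₁0 : m₁ ≠ 0 := by
        intro h; rw [h] at hm₁; simp at hm₁; linarith
      refine ⟨min η (η₁ / (-m)), m₁ * m, m₁ * b + b₁, β * m₁,
        lt_min hη (div_pos hη₁ (by linarith)), mul_ne_zero hm₁0 hm, fun y hy => ?_⟩
      have hy1 : y ∈ Set.Ioo c (c + η) :=
        ⟨hy.1, lt_of_lt_of_le hy.2 (by linarith [min_le_left η (η₁ / (-m))])⟩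
      obtain ⟨h1, h2⟩ := H y hy1
      have hy2 : y < c + η₁ / (-m) :=
        lt_of_lt_of_le hy.2 (by linarith [min_le_right η (η₁ / (-m))])
      have himg : m * y + b ∈ Set.Ioo (m * c + b - η₁) (m * c + b) := by
        constructor
        · have : (y - c) * (-m) < η₁ := (lt_div_iff₀ (by linarith)).mp (by linarith)
          nlinarith
        · nlinarith [hy.1]
      obtain ⟨h3, h4⟩ := H₁ _ himg
      constructor
      · rw [Function.iterate_succ_apply', h1, h3]; ring
      · rw [cumDeriv_succ, h2, h1, h4]
    · obtain ⟨η₁, m₁, b₁, hη₁, hm₁, H₁⟩ := exists_affine_right hε hδ (m * c + b)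
      have hm₁0 : m₁ ≠ 0 := by
        intro h; rw [h] at hm₁; simp at hm₁; linarith
      refine ⟨min η (η₁ / m), m₁ * m, m₁ * b + b₁, β * m₁,
        lt_min hη (div_pos hη₁ hpos), mul_ne_zero hm₁0 hm, fun y hy => ?_⟩
      have hy1 : y ∈ Set.Ioo c (c + η) :=
        ⟨hy.1, lt_of_lt_of_le hy.2 (by linarith [min_le_left η (η₁ / m)])⟩
      obtain ⟨h1, h2⟩ := H y hy1
      have hy2 : y < c + η₁ / m :=
        lt_of_lt_of_le hy.2 (by linarith [min_le_right η (η₁ / m)])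
      have himg : m * y + b ∈ Set.Ioo (m * c + b) (m * c + b + η₁) := by
        constructor
        · nlinarith [hy.1]
        · have : (y - c) * m < η₁ := (lt_div_iff₀ hpos).mp (by linarith)
          nlinarith
      obtain ⟨h3, h4⟩ := H₁ _ himg
      constructor
      · rw [Function.iterate_succ_apply', h1, h3]; ring
      · rw [cumDeriv_succ, h2, h1, h4]

lemma exists_germ_left (hε : 0 < ε) (hδ : 0 < δ) (c : ℝ) (n : ℕ) :
    ∃ η m b β, 0 < η ∧ m ≠ 0 ∧ ∀ y ∈ Set.Ioo (c - η) c,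
      (FrMap ε δ)^[n] y = m * y + b ∧ cumDeriv ε δ y n = β := by
  induction n with
  | zero =>
    exact ⟨1, 1, 0, 1, one_pos, one_ne_zero, fun y _ =>
      ⟨by simp, by simp [cumDeriv]⟩⟩
  | succ n ih =>
    obtain ⟨η, m, b, β, hη, hm, H⟩ := ih
    rcases hm.lt_or_gt with hneg | hpos
    · obtain ⟨η₁, m₁, b₁, hη₁, hm₁, H₁⟩ := exists_affine_right hε hδ (m * c + b)
      have hm₁0 : m₁ ≠ 0 := by
        intro h; rw [h] at hm₁; simp at hm₁; linarith
      refine ⟨min η (η₁ / (-m)), m₁ * m, m₁ * b + b₁, β * m₁,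
        lt_min hη (div_pos hη₁ (by linarith)), mul_ne_zero hm₁0 hm, fun y hy => ?_⟩
      have hy1 : y ∈ Set.Ioo (c - η) c :=
        ⟨lt_of_le_of_lt (by linarith [min_le_left η (η₁ / (-m))]) hy.1, hy.2⟩
      obtain ⟨h1, h2⟩ := H y hy1
      have hy2 : c - η₁ / (-m) < y :=
        lt_of_le_of_lt (by linarith [min_le_right η (η₁ / (-m))]) hy.1
      have himg : m * y + b ∈ Set.Ioo (m * c + b) (m * c + b + η₁) := by
        constructor
        · nlinarith [hy.2]
        · have : (c - y) * (-m) < η₁ := (lt_div_iff₀ (by linarith)).mp (by linarith)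
          nlinarith
      obtain ⟨h3, h4⟩ := H₁ _ himg
      constructor
      · rw [Function.iterate_succ_apply', h1, h3]; ring
      · rw [cumDeriv_succ, h2, h1, h4]
    · obtain ⟨η₁, m₁, b₁, hη₁, hm₁, H₁⟩ := exists_affine_left hε hδ (m * c + b)
      have hm₁0 : m₁ ≠ 0 := by
        intro h; rw [h] at hm₁; simp at hm₁; linarith
      refine ⟨min η (η₁ / m), m₁ * m, m₁ * b + b₁, β * m₁,
        lt_min hη (div_pos hη₁ hpos), mul_ne_zero hm₁0 hm, fun y hy => ?_⟩
      have hy1 : y ∈ Set.Ioo (c - η) c :=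
        ⟨lt_of_le_of_lt (by linarith [min_le_left η (η₁ / m)]) hy.1, hy.2⟩
      obtain ⟨h1, h2⟩ := H y hy1
      have hy2 : c - η₁ / m < y :=
        lt_of_le_of_lt (by linarith [min_le_right η (η₁ / m)]) hy.1
      have himg : m * y + b ∈ Set.Ioo (m * c + b - η₁) (m * c + b) := by
        constructor
        · have : (c - y) * m < η₁ := (lt_div_iff₀ hpos).mp (by linarith)
          nlinarith
        · nlinarith [hy.2]
      obtain ⟨h3, h4⟩ := H₁ _ himg
      constructor
      · rw [Function.iterate_succ_apply', h1, h3]; ring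
      · rw [cumDeriv_succ, h2, h1, h4]

lemma cumDerivL_spec (hε : 0 < ε) (hδ : 0 < δ) (c : ℝ) (n : ℕ) :
    ∀ᶠ y in nhdsWithin c (Set.Ioi c), cumDeriv ε δ y n = cumDerivL ε δ c n := by
  obtain ⟨η, m, b, β, hη, hm, H⟩ := exists_germ_right hε hδ c n
  have hev : ∀ᶠ y in nhdsWithin c (Set.Ioi c), cumDeriv ε δ y n = β :=
    Filter.eventually_of_mem (Ioo_mem_nhdsGT_of_mem ⟨le_refl c, by linarith⟩)
      (fun y hy => (H y hy).2)
  have hlim : cumDerivL ε δ c n = β := by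
    rw [cumDerivL]
    exact ((Filter.tendsto_congr' hev).mpr tendsto_const_nhds).limUnder_eq
  rw [hlim]; exact hev

lemma cumDerivR_spec (hε : 0 < ε) (hδ : 0 < δ) (c : ℝ) (n : ℕ) :
    ∀ᶠ y in nhdsWithin c (Set.Iio c), cumDeriv ε δ y n = cumDerivR ε δ c n := by
  obtain ⟨η, m, b, β, hη, hm, H⟩ := exists_germ_left hε hδ c n
  have hev : ∀ᶠ y in nhdsWithin c (Set.Iio c), cumDeriv ε δ y n = β :=
    Filter.eventually_of_mem (Ioo_mem_nhdsLT_of_mem ⟨by linarith, le_refl c⟩)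
      (fun y hy => (H y hy).2)
  have hlim : cumDerivR ε δ c n = β := by
    rw [cumDerivR]
    exact ((Filter.tendsto_congr' hev).mpr tendsto_const_nhds).limUnder_eq
  rw [hlim]; exact hev

lemma abs_cumDerivL_ge (hε : 0 < ε) (hδ : 0 < δ) (c : ℝ) (n : ℕ) :
    (2 : ℝ) ^ n ≤ |cumDerivL ε δ c n| := by
  obtain ⟨y, hy⟩ := (cumDerivL_spec hε hδ c n).exists
  rw [← hy]; exact two_pow_le_abs_cumDeriv (le_of_lt hε) (le_of_lt hδ) y n

lemma abs_cumDerivR_ge (hε : 0 < ε) (hδ : 0 < δ) (c : ℝ) (n : ℕ) :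
    (2 : ℝ) ^ n ≤ |cumDerivR ε δ c n| := by
  obtain ⟨y, hy⟩ := (cumDerivR_spec hε hδ c n).exists
  rw [← hy]; exact two_pow_le_abs_cumDeriv (le_of_lt hε) (le_of_lt hδ) y n

lemma abs_cumDerivL_mul (hε : 0 < ε) (hδ : 0 < δ) (c : ℝ) (N j : ℕ) :
    |cumDerivL ε δ c N| * 2 ^ j ≤ |cumDerivL ε δ c (N + j)| := by
  obtain ⟨y, h1, h2⟩ := ((cumDerivL_spec hε hδ c N).and (cumDerivL_spec hε hδ c (N + j))).exists
  rw [← h1, ← h2, cumDeriv_add, abs_mul]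
  exact mul_le_mul_of_nonneg_left
    (two_pow_le_abs_prod (le_of_lt hε) (le_of_lt hδ) _ j) (abs_nonneg _)

lemma abs_cumDerivR_mul (hε : 0 < ε) (hδ : 0 < δ) (c : ℝ) (N j : ℕ) :
    |cumDerivR ε δ c N| * 2 ^ j ≤ |cumDerivR ε δ c (N + j)| := by
  obtain ⟨y, h1, h2⟩ := ((cumDerivR_spec hε hδ c N).and (cumDerivR_spec hε hδ c (N + j))).exists
  rw [← h1, ← h2, cumDeriv_add, abs_mul]
  exact mul_le_mul_of_nonneg_left
    (two_pow_le_abs_prod (le_of_lt hε) (le_of_lt hδ) _ j) (abs_nonneg _)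

end GoraD
section GoraE

variable {ε δ : ℝ}

lemma pow_step (hε : 0 < ε) (n : ℕ) : ε/4 * (4+ε)^n < ε/4 * (4+ε)^(n+1) := by
  have hpow : (0:ℝ) < (4+ε)^n := by positivity
  have h2 := mul_pos (show (0:ℝ) < ε/4 by linarith) hpow
  rw [pow_succ]
  nlinarith

lemma pow_mono1 (hε : 0 < ε) {k n : ℕ} (hk : k ≤ n) :
    ε/4 * (4+ε)^k ≤ ε/4 * (4+ε)^n := by
  have := pow_le_pow_right₀ (by linarith : (1:ℝ) ≤ 4+ε) hk
  have hpow : (0:ℝ) < (4+ε)^k := by positivity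
  nlinarith

lemma orbit1 (hε : 0 < ε) (hε1 : ε < 1/5) (n : ℕ) (h : ε/4 * (4+ε)^n < 1/4) :
    (FrMap ε δ)^[n+1] (1/4) = ε/4 * (4+ε)^n := by
  induction n with
  | zero =>
    simp only [zero_add, Function.iterate_one, pow_zero, mul_one]
    have hfr : Int.fract (1/4 : ℝ) = 1/4 := Int.fract_eq_self.mpr (by norm_num)
    rw [frMap_eq, hfr, Fpiece2 (le_refl _) (by norm_num)]
    rw [show (-2-ε) * (1/4) + (3+ε)/2 = 1 + ε/4 by ring]
    rw [fract_eq_sub 1 (by push_cast; linarith) (by push_cast; linarith)]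
    push_cast; ring
  | succ n ih =>
    have h' : ε/4 * (4+ε)^n < 1/4 := lt_trans (pow_step hε n) h
    have hu0 : 0 < ε/4 * (4+ε)^n := by positivity
    have hfr : Int.fract (ε/4 * (4+ε)^n) = ε/4 * (4+ε)^n :=
      Int.fract_eq_self.mpr ⟨le_of_lt hu0, by linarith⟩
    rw [Function.iterate_succ_apply', ih h', frMap_eq, hfr, Fpiece1 (by linarith)]
    rw [show (4+ε) * (ε/4 * (4+ε)^n) = ε/4 * (4+ε)^(n+1) by rw [pow_succ]; ring]
    exact Int.fract_eq_self.mpr ⟨by positivity, by linarith⟩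

lemma germ1L (hε : 0 < ε) (hε1 : ε < 1/5) (n : ℕ) (h : ε/4 * (4+ε)^n < 1/4) :
    ∀ y ∈ Set.Ioo (1/4 : ℝ) (1/4 + ε/32),
      (FrMap ε δ)^[n+1] y = (4+ε)^n * (ε/4 - (2+ε)*(y - 1/4)) := by
  induction n with
  | zero =>
    intro y hy
    have h1 : 0 < (2+ε)*(y - 1/4) := by nlinarith [hy.1]
    have h2 : (2+ε)*(y - 1/4) < ε/8 := by nlinarith [hy.2]
    simp only [zero_add, Function.iterate_one, pow_zero, one_mul]
    have hfr : Int.fract y = y :=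
      Int.fract_eq_self.mpr ⟨by linarith [hy.1], by linarith [hy.2]⟩
    rw [frMap_eq, hfr, Fpiece2 (le_of_lt hy.1) (by linarith [hy.2])]
    rw [show (-2-ε) * y + (3+ε)/2 = 1 + (ε/4 - (2+ε)*(y - 1/4)) by ring]
    rw [fract_eq_sub 1 (by push_cast; linarith) (by push_cast; linarith)]
    push_cast; ring
  | succ n ih =>
    intro y hy
    have hpow : (0:ℝ) < (4+ε)^n := by positivity
    have hpow1 : (0:ℝ) < (4+ε)^(n+1) := by positivity
    have h' : ε/4 * (4+ε)^n < 1/4 := lt_trans (pow_step hε n) h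
    have hu := ih h' y hy
    have h1 : 0 < (2+ε)*(y - 1/4) := by nlinarith [hy.1]
    have h2 : (2+ε)*(y - 1/4) < ε/8 := by nlinarith [hy.2]
    have hu1 : 0 < (4+ε)^n * (ε/4 - (2+ε)*(y - 1/4)) := by nlinarith
    have hu2 : (4+ε)^n * (ε/4 - (2+ε)*(y - 1/4)) < 1/4 := by nlinarith
    have hfr : Int.fract ((4+ε)^n * (ε/4 - (2+ε)*(y - 1/4)))
        = (4+ε)^n * (ε/4 - (2+ε)*(y - 1/4)) :=
      Int.fract_eq_self.mpr ⟨le_of_lt hu1, by linarith⟩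
    rw [Function.iterate_succ_apply', hu, frMap_eq, hfr, Fpiece1 (by linarith)]
    rw [show (4+ε) * ((4+ε)^n * (ε/4 - (2+ε)*(y - 1/4)))
        = (4+ε)^(n+1) * (ε/4 - (2+ε)*(y - 1/4)) by rw [pow_succ]; ring]
    have hv1 : 0 < (4+ε)^(n+1) * (ε/4 - (2+ε)*(y - 1/4)) := by nlinarith
    have hv2 : (4+ε)^(n+1) * (ε/4 - (2+ε)*(y - 1/4)) < 1/4 := by nlinarith
    exact Int.fract_eq_self.mpr ⟨le_of_lt hv1, by linarith⟩

lemma cumDerivL1 (hε : 0 < ε) (hε1 : ε < 1/5) (hδ : 0 < δ) (n : ℕ)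
    (h : ε/4 * (4+ε)^n < 1/4) :
    cumDerivL ε δ (1/4) (n+1) = -((2+ε) * (4+ε)^n) := by
  have hev : ∀ᶠ y in nhdsWithin (1/4 : ℝ) (Set.Ioi (1/4 : ℝ)),
      cumDeriv ε δ y (n+1) = -((2+ε) * (4+ε)^n) := by
    refine Filter.eventually_of_mem
      (Ioo_mem_nhdsGT_of_mem ⟨le_refl _, show (1/4:ℝ) < 1/4 + ε/32 by linarith⟩) ?_
    intro y hy
    have h1 : 0 < (2+ε)*(y - 1/4) := by nlinarith [hy.1]
    have h2 : (2+ε)*(y - 1/4) < ε/8 := by nlinarith [hy.2]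
    have hfr : Int.fract y = y :=
      Int.fract_eq_self.mpr ⟨by linarith [hy.1], by linarith [hy.2]⟩
    have hcd : cumDeriv ε δ y (n+1)
        = (∏ k ∈ Finset.range n, FrSlope ε δ ((FrMap ε δ)^[k+1] y))
            * FrSlope ε δ ((FrMap ε δ)^[0] y) := by
      rw [cumDeriv, Finset.prod_range_succ']
    have hsl0 : FrSlope ε δ ((FrMap ε δ)^[0] y) = -2 - ε := by
      simp only [Function.iterate_zero_apply]
      exact FrSlope2 (by rw [hfr]; linarith [hy.1]) (by rw [hfr]; linarith [hy.2])
    have hconst : ∀ k ∈ Finset.range n, FrSlope ε δ ((FrMap ε δ)^[k+1] y) = 4 + ε := by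
      intro k hk
      have hk' : k < n := Finset.mem_range.mp hk
      have hpow : (0:ℝ) < (4+ε)^k := by positivity
      have hk4 : ε/4 * (4+ε)^k < 1/4 := lt_of_le_of_lt (pow_mono1 hε (le_of_lt hk')) h
      have hval := germ1L (δ := δ) hε hε1 k hk4 y hy
      have hu1 : 0 < (4+ε)^k * (ε/4 - (2+ε)*(y - 1/4)) := by nlinarith
      have hu2 : (4+ε)^k * (ε/4 - (2+ε)*(y - 1/4)) < 1/4 := by nlinarith
      rw [hval]
      exact FrSlope1 (by
        rw [Int.fract_eq_self.mpr ⟨le_of_lt hu1, by linarith⟩]; linarith)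
    rw [hcd, Finset.prod_congr rfl hconst, Finset.prod_const, Finset.card_range, hsl0]
    ring
  rw [cumDerivL]
  exact ((Filter.tendsto_congr' hev).mpr tendsto_const_nhds).limUnder_eq

lemma germ1R (hε : 0 < ε) (hε1 : ε < 1/5) (n : ℕ) (h : ε/4 * (4+ε)^n < 1/4) :
    ∀ y ∈ Set.Ioo (1/4 - ε/64 : ℝ) (1/4 : ℝ),
      (FrMap ε δ)^[n+1] y = (4+ε)^n * (ε/4 - (4+ε)*(1/4 - y)) := by
  induction n with
  | zero =>
    intro y hy
    have h1 : 0 < (4+ε)*(1/4 - y) := by nlinarith [hy.2]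
    have h2 : (4+ε)*(1/4 - y) < ε/8 := by nlinarith [hy.1]
    simp only [zero_add, Function.iterate_one, pow_zero, one_mul]
    have hfr : Int.fract y = y :=
      Int.fract_eq_self.mpr ⟨by linarith [hy.1], by linarith [hy.2]⟩
    rw [frMap_eq, hfr, Fpiece1 (by linarith [hy.2])]
    rw [show (4+ε) * y = 1 + (ε/4 - (4+ε)*(1/4 - y)) by ring]
    rw [fract_eq_sub 1 (by push_cast; linarith) (by push_cast; linarith)]
    push_cast; ring
  | succ n ih =>
    intro y hy
    have hpow : (0:ℝ) < (4+ε)^n := by positivity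
    have hpow1 : (0:ℝ) < (4+ε)^(n+1) := by positivity
    have h' : ε/4 * (4+ε)^n < 1/4 := lt_trans (pow_step hε n) h
    have hu := ih h' y hy
    have h1 : 0 < (4+ε)*(1/4 - y) := by nlinarith [hy.2]
    have h2 : (4+ε)*(1/4 - y) < ε/8 := by nlinarith [hy.1]
    have hu1 : 0 < (4+ε)^n * (ε/4 - (4+ε)*(1/4 - y)) := by nlinarith
    have hu2 : (4+ε)^n * (ε/4 - (4+ε)*(1/4 - y)) < 1/4 := by nlinarith
    have hfr : Int.fract ((4+ε)^n * (ε/4 - (4+ε)*(1/4 - y)))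
        = (4+ε)^n * (ε/4 - (4+ε)*(1/4 - y)) :=
      Int.fract_eq_self.mpr ⟨le_of_lt hu1, by linarith⟩
    rw [Function.iterate_succ_apply', hu, frMap_eq, hfr, Fpiece1 (by linarith)]
    rw [show (4+ε) * ((4+ε)^n * (ε/4 - (4+ε)*(1/4 - y)))
        = (4+ε)^(n+1) * (ε/4 - (4+ε)*(1/4 - y)) by rw [pow_succ]; ring]
    have hv1 : 0 < (4+ε)^(n+1) * (ε/4 - (4+ε)*(1/4 - y)) := by nlinarith
    have hv2 : (4+ε)^(n+1) * (ε/4 - (4+ε)*(1/4 - y)) < 1/4 := by nlinarith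
    exact Int.fract_eq_self.mpr ⟨le_of_lt hv1, by linarith⟩

lemma cumDerivR1 (hε : 0 < ε) (hε1 : ε < 1/5) (hδ : 0 < δ) (n : ℕ)
    (h : ε/4 * (4+ε)^n < 1/4) :
    cumDerivR ε δ (1/4) (n+1) = (4+ε)^(n+1) := by
  have hev : ∀ᶠ y in nhdsWithin (1/4 : ℝ) (Set.Iio (1/4 : ℝ)),
      cumDeriv ε δ y (n+1) = (4+ε)^(n+1) := by
    refine Filter.eventually_of_mem
      (Ioo_mem_nhdsLT_of_mem ⟨show (1/4 - ε/64 : ℝ) < 1/4 by linarith, le_refl _⟩) ?_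
    intro y hy
    have h1 : 0 < (4+ε)*(1/4 - y) := by nlinarith [hy.2]
    have h2 : (4+ε)*(1/4 - y) < ε/8 := by nlinarith [hy.1]
    have hfr : Int.fract y = y :=
      Int.fract_eq_self.mpr ⟨by linarith [hy.1], by linarith [hy.2]⟩
    have hconst : ∀ k ∈ Finset.range (n+1), FrSlope ε δ ((FrMap ε δ)^[k] y) = 4 + ε := by
      intro k hk
      have hk' : k < n + 1 := Finset.mem_range.mp hk
      rcases Nat.eq_zero_or_pos k with hk0 | hkpos
      · subst hk0
        simp only [Function.iterate_zero_apply]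
        exact FrSlope1 (by rw [hfr]; linarith [hy.2])
      · obtain ⟨j, rfl⟩ := Nat.exists_eq_succ_of_ne_zero (Nat.pos_iff_ne_zero.mp hkpos)
        have hj : j < n + 1 := by omega
        have hpow : (0:ℝ) < (4+ε)^j := by positivity
        have hj4 : ε/4 * (4+ε)^j < 1/4 :=
          lt_of_le_of_lt (pow_mono1 hε (by omega)) h
        have hval := germ1R (δ := δ) hε hε1 j hj4 y hy
        have hu1 : 0 < (4+ε)^j * (ε/4 - (4+ε)*(1/4 - y)) := by nlinarith
        have hu2 : (4+ε)^j * (ε/4 - (4+ε)*(1/4 - y)) < 1/4 := by nlinarith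
        rw [hval]
        exact FrSlope1 (by
          rw [Int.fract_eq_self.mpr ⟨le_of_lt hu1, by linarith⟩]; linarith)
    rw [cumDeriv, Finset.prod_congr rfl hconst, Finset.prod_const, Finset.card_range]
  rw [cumDerivR]
  exact ((Filter.tendsto_congr' hev).mpr tendsto_const_nhds).limUnder_eq

end GoraE
section GoraF

variable {ε δ : ℝ}

lemma orbit2 (hδ : 0 < δ) (hδ1 : δ < 1/5) (n : ℕ) (h : δ/4 * (4+δ)^n < 1/4) :
    (FrMap ε δ)^[n+1] (3/4) = 1 - δ/4 * (4+δ)^n := by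
  induction n with
  | zero =>
    simp only [zero_add, Function.iterate_one, pow_zero, mul_one]
    have hfr : Int.fract (3/4 : ℝ) = 3/4 := Int.fract_eq_self.mpr (by norm_num)
    rw [frMap_eq, hfr, Fpiece4 (le_refl _)]
    rw [show (4+δ) * (3/4) - (3+δ) = (-1 : ℤ) + (1 - δ/4) by push_cast; ring]
    rw [Int.fract_intCast_add]
    exact Int.fract_eq_self.mpr ⟨by linarith, by linarith⟩
  | succ n ih =>
    have h' : δ/4 * (4+δ)^n < 1/4 := lt_trans (pow_step hδ n) h
    have hu0 : 0 < δ/4 * (4+δ)^n := by positivity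
    have hfr : Int.fract (1 - δ/4 * (4+δ)^n) = 1 - δ/4 * (4+δ)^n :=
      Int.fract_eq_self.mpr ⟨by linarith, by linarith⟩
    rw [Function.iterate_succ_apply', ih h', frMap_eq, hfr, Fpiece4 (by linarith)]
    have hq : 0 < δ/4 * (4+δ)^(n+1) := by positivity
    rw [show (4+δ) * (1 - δ/4 * (4+δ)^n) - (3+δ) = 1 - δ/4 * (4+δ)^(n+1) by
      rw [pow_succ]; ring]
    exact Int.fract_eq_self.mpr ⟨by linarith, by linarith⟩

lemma germ2L (hδ : 0 < δ) (hδ1 : δ < 1/5) (n : ℕ) (h : δ/4 * (4+δ)^n < 1/4) :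
    ∀ y ∈ Set.Ioo (3/4 : ℝ) (3/4 + δ/64),
      (FrMap ε δ)^[n+1] y = 1 - (4+δ)^n * (δ/4 - (4+δ)*(y - 3/4)) := by
  induction n with
  | zero =>
    intro y hy
    have h1 : 0 < (4+δ)*(y - 3/4) := by nlinarith [hy.1]
    have h2 : (4+δ)*(y - 3/4) < δ/8 := by nlinarith [hy.2]
    simp only [zero_add, Function.iterate_one, pow_zero, one_mul]
    have hfr : Int.fract y = y :=
      Int.fract_eq_self.mpr ⟨by linarith [hy.1], by linarith [hy.2]⟩
    rw [frMap_eq, hfr, Fpiece4 (le_of_lt hy.1)]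
    rw [show (4+δ) * y - (3+δ) = (-1 : ℤ) + (1 - (δ/4 - (4+δ)*(y - 3/4))) by push_cast; ring]
    rw [Int.fract_intCast_add]
    exact Int.fract_eq_self.mpr ⟨by linarith, by linarith⟩
  | succ n ih =>
    intro y hy
    have hpow : (0:ℝ) < (4+δ)^n := by positivity
    have hpow1 : (0:ℝ) < (4+δ)^(n+1) := by positivity
    have h' : δ/4 * (4+δ)^n < 1/4 := lt_trans (pow_step hδ n) h
    have hu := ih h' y hy
    have h1 : 0 < (4+δ)*(y - 3/4) := by nlinarith [hy.1]
    have h2 : (4+δ)*(y - 3/4) < δ/8 := by nlinarith [hy.2]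
    have hw1 : 0 < (4+δ)^n * (δ/4 - (4+δ)*(y - 3/4)) := by nlinarith
    have hw2 : (4+δ)^n * (δ/4 - (4+δ)*(y - 3/4)) < 1/4 := by nlinarith
    have hfr : Int.fract (1 - (4+δ)^n * (δ/4 - (4+δ)*(y - 3/4)))
        = 1 - (4+δ)^n * (δ/4 - (4+δ)*(y - 3/4)) :=
      Int.fract_eq_self.mpr ⟨by linarith, by linarith⟩
    rw [Function.iterate_succ_apply', hu, frMap_eq, hfr, Fpiece4 (by linarith)]
    have hv1 : 0 < (4+δ)^(n+1) * (δ/4 - (4+δ)*(y - 3/4)) := by nlinarith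
    have hv2 : (4+δ)^(n+1) * (δ/4 - (4+δ)*(y - 3/4)) < 1/4 := by nlinarith
    rw [show (4+δ) * (1 - (4+δ)^n * (δ/4 - (4+δ)*(y - 3/4))) - (3+δ)
        = 1 - (4+δ)^(n+1) * (δ/4 - (4+δ)*(y - 3/4)) by rw [pow_succ]; ring]
    exact Int.fract_eq_self.mpr ⟨by linarith, by linarith⟩

lemma cumDerivL2 (hε : 0 < ε) (hδ : 0 < δ) (hδ1 : δ < 1/5) (n : ℕ)
    (h : δ/4 * (4+δ)^n < 1/4) :
    cumDerivL ε δ (3/4) (n+1) = (4+δ)^(n+1) := by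
  have hev : ∀ᶠ y in nhdsWithin (3/4 : ℝ) (Set.Ioi (3/4 : ℝ)),
      cumDeriv ε δ y (n+1) = (4+δ)^(n+1) := by
    refine Filter.eventually_of_mem
      (Ioo_mem_nhdsGT_of_mem ⟨le_refl _, show (3/4:ℝ) < 3/4 + δ/64 by linarith⟩) ?_
    intro y hy
    have h1 : 0 < (4+δ)*(y - 3/4) := by nlinarith [hy.1]
    have h2 : (4+δ)*(y - 3/4) < δ/8 := by nlinarith [hy.2]
    have hfr : Int.fract y = y :=
      Int.fract_eq_self.mpr ⟨by linarith [hy.1], by linarith [hy.2]⟩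
    have hconst : ∀ k ∈ Finset.range (n+1), FrSlope ε δ ((FrMap ε δ)^[k] y) = 4 + δ := by
      intro k hk
      have hk' : k < n + 1 := Finset.mem_range.mp hk
      rcases Nat.eq_zero_or_pos k with hk0 | hkpos
      · subst hk0
        simp only [Function.iterate_zero_apply]
        exact FrSlope4 (by rw [hfr]; linarith [hy.1])
      · obtain ⟨j, rfl⟩ := Nat.exists_eq_succ_of_ne_zero (Nat.pos_iff_ne_zero.mp hkpos)
        have hpow : (0:ℝ) < (4+δ)^j := by positivity
        have hj4 : δ/4 * (4+δ)^j < 1/4 := lt_of_le_of_lt (pow_mono1 hδ (by omega)) h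
        have hval := germ2L (ε := ε) hδ hδ1 j hj4 y hy
        have hw1 : 0 < (4+δ)^j * (δ/4 - (4+δ)*(y - 3/4)) := by nlinarith
        have hw2 : (4+δ)^j * (δ/4 - (4+δ)*(y - 3/4)) < 1/4 := by nlinarith
        rw [hval]
        exact FrSlope4 (by
          rw [Int.fract_eq_self.mpr ⟨by linarith, by linarith⟩]; linarith)
    rw [cumDeriv, Finset.prod_congr rfl hconst, Finset.prod_const, Finset.card_range]
  rw [cumDerivL]
  exact ((Filter.tendsto_congr' hev).mpr tendsto_const_nhds).limUnder_eq

lemma germ2R (hδ : 0 < δ) (hδ1 : δ < 1/5) (n : ℕ) (h : δ/4 * (4+δ)^n < 1/4) :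
    ∀ y ∈ Set.Ioo (3/4 - δ/64 : ℝ) (3/4 : ℝ),
      (FrMap ε δ)^[n+1] y = 1 - (4+δ)^n * (δ/4 - (2+δ)*(3/4 - y)) := by
  induction n with
  | zero =>
    intro y hy
    have h1 : 0 < (2+δ)*(3/4 - y) := by nlinarith [hy.2]
    have h2 : (2+δ)*(3/4 - y) < δ/8 := by nlinarith [hy.1]
    simp only [zero_add, Function.iterate_one, pow_zero, one_mul]
    have hfr : Int.fract y = y :=
      Int.fract_eq_self.mpr ⟨by linarith [hy.1], by linarith [hy.2]⟩
    rw [frMap_eq, hfr, Fpiece3 (by linarith [hy.1]) (by linarith [hy.2])]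
    rw [show (-2-δ) * y + (3+δ)/2 = (-1 : ℤ) + (1 - (δ/4 - (2+δ)*(3/4 - y))) by push_cast; ring]
    rw [Int.fract_intCast_add]
    exact Int.fract_eq_self.mpr ⟨by linarith, by linarith⟩
  | succ n ih =>
    intro y hy
    have hpow : (0:ℝ) < (4+δ)^n := by positivity
    have hpow1 : (0:ℝ) < (4+δ)^(n+1) := by positivity
    have h' : δ/4 * (4+δ)^n < 1/4 := lt_trans (pow_step hδ n) h
    have hu := ih h' y hy
    have h1 : 0 < (2+δ)*(3/4 - y) := by nlinarith [hy.2]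
    have h2 : (2+δ)*(3/4 - y) < δ/8 := by nlinarith [hy.1]
    have hw1 : 0 < (4+δ)^n * (δ/4 - (2+δ)*(3/4 - y)) := by nlinarith
    have hw2 : (4+δ)^n * (δ/4 - (2+δ)*(3/4 - y)) < 1/4 := by nlinarith
    have hfr : Int.fract (1 - (4+δ)^n * (δ/4 - (2+δ)*(3/4 - y)))
        = 1 - (4+δ)^n * (δ/4 - (2+δ)*(3/4 - y)) :=
      Int.fract_eq_self.mpr ⟨by linarith, by linarith⟩
    rw [Function.iterate_succ_apply', hu, frMap_eq, hfr, Fpiece4 (by linarith)]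
    have hv1 : 0 < (4+δ)^(n+1) * (δ/4 - (2+δ)*(3/4 - y)) := by nlinarith
    have hv2 : (4+δ)^(n+1) * (δ/4 - (2+δ)*(3/4 - y)) < 1/4 := by nlinarith
    rw [show (4+δ) * (1 - (4+δ)^n * (δ/4 - (2+δ)*(3/4 - y))) - (3+δ)
        = 1 - (4+δ)^(n+1) * (δ/4 - (2+δ)*(3/4 - y)) by rw [pow_succ]; ring]
    exact Int.fract_eq_self.mpr ⟨by linarith, by linarith⟩

lemma cumDerivR2 (hε : 0 < ε) (hδ : 0 < δ) (hδ1 : δ < 1/5) (n : ℕ)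
    (h : δ/4 * (4+δ)^n < 1/4) :
    cumDerivR ε δ (3/4) (n+1) = -((2+δ) * (4+δ)^n) := by
  have hev : ∀ᶠ y in nhdsWithin (3/4 : ℝ) (Set.Iio (3/4 : ℝ)),
      cumDeriv ε δ y (n+1) = -((2+δ) * (4+δ)^n) := by
    refine Filter.eventually_of_mem
      (Ioo_mem_nhdsLT_of_mem ⟨show (3/4 - δ/64 : ℝ) < 3/4 by linarith, le_refl _⟩) ?_
    intro y hy
    have h1 : 0 < (2+δ)*(3/4 - y) := by nlinarith [hy.2]
    have h2 : (2+δ)*(3/4 - y) < δ/8 := by nlinarith [hy.1]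
    have hfr : Int.fract y = y :=
      Int.fract_eq_self.mpr ⟨by linarith [hy.1], by linarith [hy.2]⟩
    have hcd : cumDeriv ε δ y (n+1)
        = (∏ k ∈ Finset.range n, FrSlope ε δ ((FrMap ε δ)^[k+1] y))
            * FrSlope ε δ ((FrMap ε δ)^[0] y) := by
      rw [cumDeriv, Finset.prod_range_succ']
    have hsl0 : FrSlope ε δ ((FrMap ε δ)^[0] y) = -2 - δ := by
      simp only [Function.iterate_zero_apply]
      exact FrSlope3 (by rw [hfr]; linarith [hy.1]) (by rw [hfr]; linarith [hy.2])
    have hconst : ∀ k ∈ Finset.range n, FrSlope ε δ ((FrMap ε δ)^[k+1] y) = 4 + δ := by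
      intro k hk
      have hk' : k < n := Finset.mem_range.mp hk
      have hpow : (0:ℝ) < (4+δ)^k := by positivity
      have hk4 : δ/4 * (4+δ)^k < 1/4 := lt_of_le_of_lt (pow_mono1 hδ (le_of_lt hk')) h
      have hval := germ2R (ε := ε) hδ hδ1 k hk4 y hy
      have hw1 : 0 < (4+δ)^k * (δ/4 - (2+δ)*(3/4 - y)) := by nlinarith
      have hw2 : (4+δ)^k * (δ/4 - (2+δ)*(3/4 - y)) < 1/4 := by nlinarith
      rw [hval]
      exact FrSlope4 (by
        rw [Int.fract_eq_self.mpr ⟨by linarith, by linarith⟩]; linarith)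
    rw [hcd, Finset.prod_congr rfl hconst, Finset.prod_const, Finset.card_range, hsl0]
    ring
  rw [cumDerivR]
  exact ((Filter.tendsto_congr' hev).mpr tendsto_const_nhds).limUnder_eq

end GoraF
section GoraG

variable {ε δ : ℝ}

lemma geom_half_shift : Summable (fun i : ℕ => (1/2 : ℝ)^(i+1)) := by
  have hg : Summable (fun n : ℕ => (1/2 : ℝ)^n) := summable_geometric_two
  have := hg.mul_right (1/2 : ℝ)
  refine this.congr (fun i => ?_)
  rw [pow_succ]

lemma tsum_geom_half_shift : ∑' i : ℕ, (1/2 : ℝ)^(i+1) = 1 := by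
  have h1 : ∑' i : ℕ, (1/2 : ℝ)^(i+1) = ∑' i : ℕ, (1/2 : ℝ) * (1/2)^i := by
    refine tsum_congr (fun i => ?_)
    rw [pow_succ]; ring
  rw [h1, tsum_mul_left, tsum_geometric_of_lt_one (by norm_num) (by norm_num)]
  norm_num

lemma tsum_tail_bound {t : ℕ → ℝ} {β : ℕ → ℝ} {N : ℕ} {R : ℝ}
    (hR : 0 < R)
    (h1 : ∀ n, 0 ≤ t n)
    (h2 : ∀ n, t n ≤ |β n|⁻¹)
    (h3 : ∀ n, (2:ℝ)^n ≤ |β n|)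
    (h4 : ∀ j, |β N| * 2^j ≤ |β (N+j)|)
    (h5 : ∀ m, 1 ≤ m → m ≤ N → t m = 0)
    (h7 : R ≤ |β N|) :
    ∑' k : ℕ, t (k+1) ≤ R⁻¹ := by
  have hb : ∀ n, (0:ℝ) < |β n| := fun n => lt_of_lt_of_le (by positivity) (h3 n)
  have hle : ∀ k : ℕ, t (k+1) ≤ (1/2 : ℝ)^(k+1) := by
    intro k
    refine le_trans (h2 (k+1)) ?_
    rw [show ((1:ℝ)/2)^(k+1) = ((2:ℝ)^(k+1))⁻¹ by rw [one_div, inv_pow]]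
    exact inv_anti₀ (by positivity) (h3 (k+1))
  have hsum : Summable (fun k : ℕ => t (k+1)) :=
    Summable.of_nonneg_of_le (fun k => h1 _) hle geom_half_shift
  rw [← Summable.sum_add_tsum_nat_add N hsum]
  have hz : ∑ i ∈ Finset.range N, t (i+1) = 0 :=
    Finset.sum_eq_zero (fun i hi => h5 _ (by omega) (by
      have := Finset.mem_range.mp hi; omega))
  rw [hz, zero_add]
  have key : ∀ i : ℕ, t (i + N + 1) ≤ R⁻¹ * (1/2)^(i+1) := by
    intro i
    have e : i + N + 1 = N + (i+1) := by omega
    rw [e]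
    refine le_trans (h2 _) ?_
    have hRb : R * 2^(i+1) ≤ |β (N + (i+1))| :=
      le_trans (mul_le_mul_of_nonneg_right h7 (by positivity)) (h4 (i+1))
    refine le_trans (inv_anti₀ (by positivity) hRb) ?_
    rw [mul_inv]
    apply le_of_eq
    congr 1
    rw [one_div, inv_pow]
  have hsum2 : Summable (fun i : ℕ => t (i + N + 1)) := (summable_nat_add_iff N).mpr hsum
  calc ∑' i : ℕ, t (i + N + 1) ≤ ∑' i : ℕ, R⁻¹ * (1/2)^(i+1) :=
        Summable.tsum_le_tsum key hsum2 (geom_half_shift.mul_left _)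
    _ = R⁻¹ * ∑' i : ℕ, (1/2 : ℝ)^(i+1) := tsum_mul_left
    _ = R⁻¹ := by rw [tsum_geom_half_shift, mul_one]

lemma goraInd_term_nonneg (x A B : ℝ) (C : ℝ) : 0 ≤ goraInd x A B / |C| :=
  div_nonneg (goraInd_nonneg x A B) (abs_nonneg _)

lemma goraInd_term_le (x A B : ℝ) (C : ℝ) : goraInd x A B / |C| ≤ |C|⁻¹ := by
  rw [div_eq_mul_inv]
  calc goraInd x A B * |C|⁻¹ ≤ 1 * |C|⁻¹ :=
        mul_le_mul_of_nonneg_right (goraInd_le_one x A B) (by positivity)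
    _ = |C|⁻¹ := one_mul _

lemma goraInd_zero_of_lt {x A B : ℝ} (h1 : A < x) (h2 : 0 < B) : goraInd x A B = 0 := by
  rw [goraInd, if_neg]
  push_neg
  constructor
  · intro hmem; exact absurd hmem.2 (not_le.mpr h1)
  · intro _; linarith

lemma goraInd_zero_of_gt {x A B : ℝ} (h1 : x < A) (h2 : B < 0) : goraInd x A B = 0 := by
  rw [goraInd, if_neg]
  push_neg
  constructor
  · intro hmem; linarith
  · intro hmem; exact absurd hmem.1 (not_le.mpr h1)

end GoraG
section GoraH

variable {ε δ : ℝ}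

lemma tsum_term_le_one {t β : ℕ → ℝ}
    (h1 : ∀ n, 0 ≤ t n) (h2 : ∀ n, t n ≤ |β n|⁻¹)
    (h3 : ∀ n, (2:ℝ)^n ≤ |β n|) (h4 : ∀ j, |β 0| * 2^j ≤ |β j|) :
    ∑' k : ℕ, t (k+1) ≤ 1 := by
  have := tsum_tail_bound (N := 0) (R := 1) one_pos h1 h2 h3
    (fun j => by simpa using h4 j)
    (fun m hm1 hm0 => absurd (hm1.trans hm0) (by omega))
    (by simpa using h3 0)
  simpa using this

lemma spike1L (hε : 0 < ε) (hδ : 0 < δ) {d0 x : ℝ} (hd0 : 0 < d0) (hd5 : d0 ≤ 1/5)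
    (hεd : ε < d0) (hx : d0 ≤ x) :
    ∑' n : ℕ, goraInd x ((FrMap ε δ)^[n + 1] (1 / 4)) (-cumDerivL ε δ (1 / 4) (n + 1))
      / |cumDerivL ε δ (1 / 4) (n + 1)| ≤ ε / d0 := by
  have hε1 : ε < 1/5 := lt_of_lt_of_le hεd hd5
  have hex : ∃ n : ℕ, d0 ≤ ε/4 * (4+ε)^n := by
    obtain ⟨n, hn⟩ := pow_unbounded_of_one_lt (4*d0/ε) (by linarith : (1:ℝ) < 4+ε)
    refine ⟨n, le_of_lt ?_⟩
    rw [div_lt_iff₀ hε] at hn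
    nlinarith
  classical
  set N := Nat.find hex with hNdef
  have hNspec : d0 ≤ ε/4 * (4+ε)^N := Nat.find_spec hex
  have hlt : ∀ m, m < N → ε/4 * (4+ε)^m < d0 := fun m hm => not_le.mp (Nat.find_min hex hm)
  have hN1 : 1 ≤ N := by
    by_contra hc
    push_neg at hc
    interval_cases N
    · simp only [pow_zero, mul_one] at hNspec; linarith
  obtain ⟨M, hMs⟩ := Nat.exists_eq_succ_of_ne_zero (by omega : N ≠ 0)
  have hM : N = M + 1 := by omega
  have hphM : ε/4 * (4+ε)^M < d0 := hlt M (by omega)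
  have hβN : cumDerivL ε δ (1/4) N = -((2+ε) * (4+ε)^M) := by
    rw [hM]; exact cumDerivL1 hε hε1 hδ M (by linarith)
  have habsN : |cumDerivL ε δ (1/4) N| = (2+ε) * (4+ε)^M := by
    rw [hβN, abs_neg, abs_of_pos (by positivity)]
  have hRle : d0/ε ≤ |cumDerivL ε δ (1/4) N| := by
    rw [habsN, div_le_iff₀ hε]
    have hpow : (0:ℝ) < (4+ε)^M := by positivity
    have : d0 ≤ ε/4 * (4+ε)^(M+1) := hM ▸ hNspec
    rw [pow_succ] at this
    nlinarith
  have hmain := tsum_tail_bound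
    (t := fun m => goraInd x ((FrMap ε δ)^[m] (1/4)) (-cumDerivL ε δ (1/4) m)
      / |cumDerivL ε δ (1/4) m|)
    (β := fun m => cumDerivL ε δ (1/4) m)
    (N := N) (R := d0/ε) (by positivity)
    (fun n => goraInd_term_nonneg _ _ _ _)
    (fun n => goraInd_term_le _ _ _ _)
    (fun n => abs_cumDerivL_ge hε hδ _ n)
    (fun j => abs_cumDerivL_mul hε hδ _ N j)
    (fun m hm1 hmN => ?_) hRle
  · calc _ ≤ (d0/ε)⁻¹ := hmain
      _ = ε / d0 := by rw [inv_div]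
  · obtain ⟨j, rfl⟩ := Nat.exists_eq_succ_of_ne_zero (by omega : m ≠ 0)
    have hph : ε/4 * (4+ε)^j < d0 := hlt j (by omega)
    have hph4 : ε/4 * (4+ε)^j < 1/4 := by linarith
    have hA := orbit1 (δ := δ) hε hε1 j hph4
    have hB := cumDerivL1 hε hε1 hδ j hph4
    rw [hA, hB, neg_neg]
    rw [goraInd_zero_of_lt (by linarith) (by positivity), zero_div]

lemma spike1R (hε : 0 < ε) (hδ : 0 < δ) {d0 x : ℝ} (hd0 : 0 < d0) (hd5 : d0 ≤ 1/5)
    (hεd : ε < d0) (hx : d0 ≤ x) :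
    ∑' n : ℕ, goraInd x ((FrMap ε δ)^[n + 1] (1 / 4)) (cumDerivR ε δ (1 / 4) (n + 1))
      / |cumDerivR ε δ (1 / 4) (n + 1)| ≤ ε / d0 := by
  have hε1 : ε < 1/5 := lt_of_lt_of_le hεd hd5
  have hex : ∃ n : ℕ, d0 ≤ ε/4 * (4+ε)^n := by
    obtain ⟨n, hn⟩ := pow_unbounded_of_one_lt (4*d0/ε) (by linarith : (1:ℝ) < 4+ε)
    refine ⟨n, le_of_lt ?_⟩
    rw [div_lt_iff₀ hε] at hn
    nlinarith
  classical
  set N := Nat.find hex with hNdef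
  have hNspec : d0 ≤ ε/4 * (4+ε)^N := Nat.find_spec hex
  have hlt : ∀ m, m < N → ε/4 * (4+ε)^m < d0 := fun m hm => not_le.mp (Nat.find_min hex hm)
  have hN1 : 1 ≤ N := by
    by_contra hc
    push_neg at hc
    interval_cases N
    · simp only [pow_zero, mul_one] at hNspec; linarith
  obtain ⟨M, hMs⟩ := Nat.exists_eq_succ_of_ne_zero (by omega : N ≠ 0)
  have hM : N = M + 1 := by omega
  have hphM : ε/4 * (4+ε)^M < d0 := hlt M (by omega)
  have hβN : cumDerivR ε δ (1/4) N = (4+ε)^N := by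
    rw [hM]; exact cumDerivR1 hε hε1 hδ M (by linarith)
  have hRle : d0/ε ≤ |cumDerivR ε δ (1/4) N| := by
    rw [hβN, abs_of_pos (by positivity), div_le_iff₀ hε, hM]
    have hpow : (0:ℝ) < (4+ε)^M := by positivity
    have : d0 ≤ ε/4 * (4+ε)^(M+1) := hM ▸ hNspec
    rw [pow_succ] at this ⊢
    nlinarith
  have hmain := tsum_tail_bound
    (t := fun m => goraInd x ((FrMap ε δ)^[m] (1/4)) (cumDerivR ε δ (1/4) m)
      / |cumDerivR ε δ (1/4) m|)
    (β := fun m => cumDerivR ε δ (1/4) m)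
    (N := N) (R := d0/ε) (by positivity)
    (fun n => goraInd_term_nonneg _ _ _ _)
    (fun n => goraInd_term_le _ _ _ _)
    (fun n => abs_cumDerivR_ge hε hδ _ n)
    (fun j => abs_cumDerivR_mul hε hδ _ N j)
    (fun m hm1 hmN => ?_) hRle
  · calc _ ≤ (d0/ε)⁻¹ := hmain
      _ = ε / d0 := by rw [inv_div]
  · obtain ⟨j, rfl⟩ := Nat.exists_eq_succ_of_ne_zero (by omega : m ≠ 0)
    have hph : ε/4 * (4+ε)^j < d0 := hlt j (by omega)
    have hph4 : ε/4 * (4+ε)^j < 1/4 := by linarith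
    have hA := orbit1 (δ := δ) hε hε1 j hph4
    have hB := cumDerivR1 hε hε1 hδ j hph4
    rw [hA, hB]
    rw [goraInd_zero_of_lt (by linarith) (by positivity), zero_div]

lemma spike2L (hε : 0 < ε) (hδ : 0 < δ) {d0 x : ℝ} (hd0 : 0 < d0) (hd5 : d0 ≤ 1/5)
    (hδd : δ < d0) (hx : x ≤ 1 - d0) :
    ∑' n : ℕ, goraInd x ((FrMap ε δ)^[n + 1] (3 / 4)) (-cumDerivL ε δ (3 / 4) (n + 1))
      / |cumDerivL ε δ (3 / 4) (n + 1)| ≤ δ / d0 := by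
  have hδ1 : δ < 1/5 := lt_of_lt_of_le hδd hd5
  have hex : ∃ n : ℕ, d0 ≤ δ/4 * (4+δ)^n := by
    obtain ⟨n, hn⟩ := pow_unbounded_of_one_lt (4*d0/δ) (by linarith : (1:ℝ) < 4+δ)
    refine ⟨n, le_of_lt ?_⟩
    rw [div_lt_iff₀ hδ] at hn
    nlinarith
  classical
  set N := Nat.find hex with hNdef
  have hNspec : d0 ≤ δ/4 * (4+δ)^N := Nat.find_spec hex
  have hlt : ∀ m, m < N → δ/4 * (4+δ)^m < d0 := fun m hm => not_le.mp (Nat.find_min hex hm)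
  have hN1 : 1 ≤ N := by
    by_contra hc
    push_neg at hc
    interval_cases N
    · simp only [pow_zero, mul_one] at hNspec; linarith
  obtain ⟨M, hMs⟩ := Nat.exists_eq_succ_of_ne_zero (by omega : N ≠ 0)
  have hM : N = M + 1 := by omega
  have hphM : δ/4 * (4+δ)^M < d0 := hlt M (by omega)
  have hβN : cumDerivL ε δ (3/4) N = (4+δ)^N := by
    rw [hM]; exact cumDerivL2 hε hδ hδ1 M (by linarith)
  have hRle : d0/δ ≤ |cumDerivL ε δ (3/4) N| := by
    rw [hβN, abs_of_pos (by positivity), div_le_iff₀ hδ, hM]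
    have hpow : (0:ℝ) < (4+δ)^M := by positivity
    have : d0 ≤ δ/4 * (4+δ)^(M+1) := hM ▸ hNspec
    rw [pow_succ] at this ⊢
    nlinarith
  have hmain := tsum_tail_bound
    (t := fun m => goraInd x ((FrMap ε δ)^[m] (3/4)) (-cumDerivL ε δ (3/4) m)
      / |cumDerivL ε δ (3/4) m|)
    (β := fun m => cumDerivL ε δ (3/4) m)
    (N := N) (R := d0/δ) (by positivity)
    (fun n => goraInd_term_nonneg _ _ _ _)
    (fun n => goraInd_term_le _ _ _ _)
    (fun n => abs_cumDerivL_ge hε hδ _ n)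
    (fun j => abs_cumDerivL_mul hε hδ _ N j)
    (fun m hm1 hmN => ?_) hRle
  · calc _ ≤ (d0/δ)⁻¹ := hmain
      _ = δ / d0 := by rw [inv_div]
  · obtain ⟨j, rfl⟩ := Nat.exists_eq_succ_of_ne_zero (by omega : m ≠ 0)
    have hph : δ/4 * (4+δ)^j < d0 := hlt j (by omega)
    have hph4 : δ/4 * (4+δ)^j < 1/4 := by linarith
    have hA := orbit2 (ε := ε) hδ hδ1 j hph4
    have hB := cumDerivL2 hε hδ hδ1 j hph4
    rw [hA, hB]
    have hj0 : (0:ℝ) < δ/4 * (4+δ)^j := by positivity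
    rw [goraInd_zero_of_gt (by linarith) (by rw [neg_lt, neg_zero]; positivity), zero_div]

lemma spike2R (hε : 0 < ε) (hδ : 0 < δ) {d0 x : ℝ} (hd0 : 0 < d0) (hd5 : d0 ≤ 1/5)
    (hδd : δ < d0) (hx : x ≤ 1 - d0) :
    ∑' n : ℕ, goraInd x ((FrMap ε δ)^[n + 1] (3 / 4)) (cumDerivR ε δ (3 / 4) (n + 1))
      / |cumDerivR ε δ (3 / 4) (n + 1)| ≤ δ / d0 := by
  have hδ1 : δ < 1/5 := lt_of_lt_of_le hδd hd5
  have hex : ∃ n : ℕ, d0 ≤ δ/4 * (4+δ)^n := by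
    obtain ⟨n, hn⟩ := pow_unbounded_of_one_lt (4*d0/δ) (by linarith : (1:ℝ) < 4+δ)
    refine ⟨n, le_of_lt ?_⟩
    rw [div_lt_iff₀ hδ] at hn
    nlinarith
  classical
  set N := Nat.find hex with hNdef
  have hNspec : d0 ≤ δ/4 * (4+δ)^N := Nat.find_spec hex
  have hlt : ∀ m, m < N → δ/4 * (4+δ)^m < d0 := fun m hm => not_le.mp (Nat.find_min hex hm)
  have hN1 : 1 ≤ N := by
    by_contra hc
    push_neg at hc
    interval_cases N
    · simp only [pow_zero, mul_one] at hNspec; linarith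
  obtain ⟨M, hMs⟩ := Nat.exists_eq_succ_of_ne_zero (by omega : N ≠ 0)
  have hM : N = M + 1 := by omega
  have hphM : δ/4 * (4+δ)^M < d0 := hlt M (by omega)
  have hβN : cumDerivR ε δ (3/4) N = -((2+δ) * (4+δ)^M) := by
    rw [hM]; exact cumDerivR2 hε hδ hδ1 M (by linarith)
  have hRle : d0/δ ≤ |cumDerivR ε δ (3/4) N| := by
    rw [hβN, abs_neg, abs_of_pos (by positivity), div_le_iff₀ hδ]
    have hpow : (0:ℝ) < (4+δ)^M := by positivity
    have : d0 ≤ δ/4 * (4+δ)^(M+1) := hM ▸ hNspec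
    rw [pow_succ] at this
    nlinarith
  have hmain := tsum_tail_bound
    (t := fun m => goraInd x ((FrMap ε δ)^[m] (3/4)) (cumDerivR ε δ (3/4) m)
      / |cumDerivR ε δ (3/4) m|)
    (β := fun m => cumDerivR ε δ (3/4) m)
    (N := N) (R := d0/δ) (by positivity)
    (fun n => goraInd_term_nonneg _ _ _ _)
    (fun n => goraInd_term_le _ _ _ _)
    (fun n => abs_cumDerivR_ge hε hδ _ n)
    (fun j => abs_cumDerivR_mul hε hδ _ N j)
    (fun m hm1 hmN => ?_) hRle
  · calc _ ≤ (d0/δ)⁻¹ := hmain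
      _ = δ / d0 := by rw [inv_div]
  · obtain ⟨j, rfl⟩ := Nat.exists_eq_succ_of_ne_zero (by omega : m ≠ 0)
    have hph : δ/4 * (4+δ)^j < d0 := hlt j (by omega)
    have hph4 : δ/4 * (4+δ)^j < 1/4 := by linarith
    have hA := orbit2 (ε := ε) hδ hδ1 j hph4
    have hB := cumDerivR2 hε hδ hδ1 j hph4
    rw [hA, hB]
    have hj0 : (0:ℝ) < δ/4 * (4+δ)^j := by positivity
    rw [goraInd_zero_of_gt (by linarith) (by rw [neg_lt, neg_zero]; positivity), zero_div]

end GoraH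
noncomputable def Tgd1 (ε δ x : ℝ) : ℝ :=
  ∑' n : ℕ, goraInd x ((FrMap ε δ)^[n + 1] (1 / 4)) (-cumDerivL ε δ (1 / 4) (n + 1))
    / |cumDerivL ε δ (1 / 4) (n + 1)|

noncomputable def Tgd2 (ε δ x : ℝ) : ℝ :=
  ∑' n : ℕ, goraInd x ((FrMap ε δ)^[n + 1] (3 / 4)) (-cumDerivL ε δ (3 / 4) (n + 1))
    / |cumDerivL ε δ (3 / 4) (n + 1)|

noncomputable def Tgd3 (ε δ x : ℝ) : ℝ :=
  ∑' n : ℕ, goraInd x ((FrMap ε δ)^[n + 1] (1 / 4)) (cumDerivR ε δ (1 / 4) (n + 1))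
    / |cumDerivR ε δ (1 / 4) (n + 1)|

noncomputable def Tgd4 (ε δ x : ℝ) : ℝ :=
  ∑' n : ℕ, goraInd x ((FrMap ε δ)^[n + 1] (3 / 4)) (cumDerivR ε δ (3 / 4) (n + 1))
    / |cumDerivR ε δ (3 / 4) (n + 1)|

lemma goraDensity_eq (K D1 D2 D3 D4 ε δ x : ℝ) :
    goraDensity K D1 D2 D3 D4 ε δ x
      = K⁻¹ * (1 + D1 * Tgd1 ε δ x + D2 * Tgd2 ε δ x + D3 * Tgd3 ε δ x + D4 * Tgd4 ε δ x) :=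
  rfl

section GoraI

variable {ε δ : ℝ}

lemma Tgd1_nonneg (ε δ x : ℝ) : 0 ≤ Tgd1 ε δ x :=
  tsum_nonneg (fun n => goraInd_term_nonneg _ _ _ _)

lemma Tgd2_nonneg (ε δ x : ℝ) : 0 ≤ Tgd2 ε δ x :=
  tsum_nonneg (fun n => goraInd_term_nonneg _ _ _ _)

lemma Tgd3_nonneg (ε δ x : ℝ) : 0 ≤ Tgd3 ε δ x :=
  tsum_nonneg (fun n => goraInd_term_nonneg _ _ _ _)

lemma Tgd4_nonneg (ε δ x : ℝ) : 0 ≤ Tgd4 ε δ x :=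
  tsum_nonneg (fun n => goraInd_term_nonneg _ _ _ _)

lemma Tgd1_le_one (hε : 0 < ε) (hδ : 0 < δ) (x : ℝ) : Tgd1 ε δ x ≤ 1 := by
  unfold Tgd1
  exact tsum_term_le_one
    (t := fun m => goraInd x ((FrMap ε δ)^[m] (1/4)) (-cumDerivL ε δ (1/4) m) / |cumDerivL ε δ (1/4) m|)
    (β := fun m => cumDerivL ε δ (1/4) m)
    (fun n => goraInd_term_nonneg _ _ _ _)
    (fun n => goraInd_term_le _ _ _ _)
    (fun n => abs_cumDerivL_ge hε hδ _ n)
    (fun j => by have := abs_cumDerivL_mul hε hδ (1/4) 0 j; rwa [zero_add] at this)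

lemma Tgd2_le_one (hε : 0 < ε) (hδ : 0 < δ) (x : ℝ) : Tgd2 ε δ x ≤ 1 := by
  unfold Tgd2
  exact tsum_term_le_one
    (t := fun m => goraInd x ((FrMap ε δ)^[m] (3/4)) (-cumDerivL ε δ (3/4) m) / |cumDerivL ε δ (3/4) m|)
    (β := fun m => cumDerivL ε δ (3/4) m)
    (fun n => goraInd_term_nonneg _ _ _ _)
    (fun n => goraInd_term_le _ _ _ _)
    (fun n => abs_cumDerivL_ge hε hδ _ n)
    (fun j => by have := abs_cumDerivL_mul hε hδ (3/4) 0 j; rwa [zero_add] at this)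

lemma Tgd3_le_one (hε : 0 < ε) (hδ : 0 < δ) (x : ℝ) : Tgd3 ε δ x ≤ 1 := by
  unfold Tgd3
  exact tsum_term_le_one
    (t := fun m => goraInd x ((FrMap ε δ)^[m] (1/4)) (cumDerivR ε δ (1/4) m) / |cumDerivR ε δ (1/4) m|)
    (β := fun m => cumDerivR ε δ (1/4) m)
    (fun n => goraInd_term_nonneg _ _ _ _)
    (fun n => goraInd_term_le _ _ _ _)
    (fun n => abs_cumDerivR_ge hε hδ _ n)
    (fun j => by have := abs_cumDerivR_mul hε hδ (1/4) 0 j; rwa [zero_add] at this)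

lemma Tgd4_le_one (hε : 0 < ε) (hδ : 0 < δ) (x : ℝ) : Tgd4 ε δ x ≤ 1 := by
  unfold Tgd4
  exact tsum_term_le_one
    (t := fun m => goraInd x ((FrMap ε δ)^[m] (3/4)) (cumDerivR ε δ (3/4) m) / |cumDerivR ε δ (3/4) m|)
    (β := fun m => cumDerivR ε δ (3/4) m)
    (fun n => goraInd_term_nonneg _ _ _ _)
    (fun n => goraInd_term_le _ _ _ _)
    (fun n => abs_cumDerivR_ge hε hδ _ n)
    (fun j => by have := abs_cumDerivR_mul hε hδ (3/4) 0 j; rwa [zero_add] at this)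

lemma Tgd1_small (hε : 0 < ε) (hδ : 0 < δ) {d0 x : ℝ} (hd0 : 0 < d0) (hd5 : d0 ≤ 1/5)
    (hεd : ε < d0) (hx : d0 ≤ x) : Tgd1 ε δ x ≤ ε / d0 := by
  unfold Tgd1; exact spike1L hε hδ hd0 hd5 hεd hx

lemma Tgd2_small (hε : 0 < ε) (hδ : 0 < δ) {d0 x : ℝ} (hd0 : 0 < d0) (hd5 : d0 ≤ 1/5)
    (hδd : δ < d0) (hx : x ≤ 1 - d0) : Tgd2 ε δ x ≤ δ / d0 := by
  unfold Tgd2; exact spike2L hε hδ hd0 hd5 hδd hx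

lemma Tgd3_small (hε : 0 < ε) (hδ : 0 < δ) {d0 x : ℝ} (hd0 : 0 < d0) (hd5 : d0 ≤ 1/5)
    (hεd : ε < d0) (hx : d0 ≤ x) : Tgd3 ε δ x ≤ ε / d0 := by
  unfold Tgd3; exact spike1R hε hδ hd0 hd5 hεd hx

lemma Tgd4_small (hε : 0 < ε) (hδ : 0 < δ) {d0 x : ℝ} (hd0 : 0 < d0) (hd5 : d0 ≤ 1/5)
    (hδd : δ < d0) (hx : x ≤ 1 - d0) : Tgd4 ε δ x ≤ δ / d0 := by
  unfold Tgd4; exact spike2R hε hδ hd0 hd5 hδd hx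

/-- bound on the sum part, valid on the strip `[d0, 1-d0]`. -/
lemma Sgd_bound {D1 D2 D3 D4 d0 x : ℝ} (hε : 0 < ε) (hδ : 0 < δ)
    (hd0 : 0 < d0) (hd5 : d0 ≤ 1/5) (hεd : ε < d0) (hδd : δ < d0)
    (hx1 : d0 ≤ x) (hx2 : x ≤ 1 - d0)
    (hD1 : 0 ≤ D1) (hD1' : D1 ≤ 3/2) (hD2 : 0 ≤ D2) (hD2' : D2 ≤ 3/2)
    (hD3 : 0 ≤ D3) (hD3' : D3 ≤ 3/2) (hD4 : 0 ≤ D4) (hD4' : D4 ≤ 3/2) :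
    D1 * Tgd1 ε δ x + D2 * Tgd2 ε δ x + D3 * Tgd3 ε δ x + D4 * Tgd4 ε δ x
      ≤ 3 * (ε + δ) / d0 := by
  have h1 : D1 * Tgd1 ε δ x ≤ (3/2) * (ε/d0) :=
    mul_le_mul hD1' (Tgd1_small hε hδ hd0 hd5 hεd hx1) (Tgd1_nonneg _ _ _) (by norm_num)
  have h2 : D2 * Tgd2 ε δ x ≤ (3/2) * (δ/d0) :=
    mul_le_mul hD2' (Tgd2_small hε hδ hd0 hd5 hδd hx2) (Tgd2_nonneg _ _ _) (by norm_num)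
  have h3 : D3 * Tgd3 ε δ x ≤ (3/2) * (ε/d0) :=
    mul_le_mul hD3' (Tgd3_small hε hδ hd0 hd5 hεd hx1) (Tgd3_nonneg _ _ _) (by norm_num)
  have h4 : D4 * Tgd4 ε δ x ≤ (3/2) * (δ/d0) :=
    mul_le_mul hD4' (Tgd4_small hε hδ hd0 hd5 hδd hx2) (Tgd4_nonneg _ _ _) (by norm_num)
  have he : (3/2) * (ε/d0) + (3/2) * (δ/d0) + (3/2) * (ε/d0) + (3/2) * (δ/d0)
      = 3 * (ε + δ) / d0 := by field_simp; ring
  linarith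

lemma Sgd_nonneg {D1 D2 D3 D4 x : ℝ}
    (hD1 : 0 ≤ D1) (hD2 : 0 ≤ D2) (hD3 : 0 ≤ D3) (hD4 : 0 ≤ D4) :
    0 ≤ D1 * Tgd1 ε δ x + D2 * Tgd2 ε δ x + D3 * Tgd3 ε δ x + D4 * Tgd4 ε δ x := by
  have h1 := mul_nonneg hD1 (Tgd1_nonneg ε δ x)
  have h2 := mul_nonneg hD2 (Tgd2_nonneg ε δ x)
  have h3 := mul_nonneg hD3 (Tgd3_nonneg ε δ x)
  have h4 := mul_nonneg hD4 (Tgd4_nonneg ε δ x)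
  linarith

lemma Sgd_le_six {D1 D2 D3 D4 x : ℝ} (hε : 0 < ε) (hδ : 0 < δ)
    (hD1 : 0 ≤ D1) (hD1' : D1 ≤ 3/2) (hD2 : 0 ≤ D2) (hD2' : D2 ≤ 3/2)
    (hD3 : 0 ≤ D3) (hD3' : D3 ≤ 3/2) (hD4 : 0 ≤ D4) (hD4' : D4 ≤ 3/2) :
    D1 * Tgd1 ε δ x + D2 * Tgd2 ε δ x + D3 * Tgd3 ε δ x + D4 * Tgd4 ε δ x ≤ 6 := by
  have h1 : D1 * Tgd1 ε δ x ≤ (3/2) * 1 :=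
    mul_le_mul hD1' (Tgd1_le_one hε hδ x) (Tgd1_nonneg _ _ _) (by norm_num)
  have h2 : D2 * Tgd2 ε δ x ≤ (3/2) * 1 :=
    mul_le_mul hD2' (Tgd2_le_one hε hδ x) (Tgd2_nonneg _ _ _) (by norm_num)
  have h3 : D3 * Tgd3 ε δ x ≤ (3/2) * 1 :=
    mul_le_mul hD3' (Tgd3_le_one hε hδ x) (Tgd3_nonneg _ _ _) (by norm_num)
  have h4 : D4 * Tgd4 ε δ x ≤ (3/2) * 1 :=
    mul_le_mul hD4' (Tgd4_le_one hε hδ x) (Tgd4_nonneg _ _ _) (by norm_num)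
  linarith

end GoraI

lemma D_window {D : ℝ → ℝ → ℝ}
    (h : Filter.Tendsto (fun p : ℝ × ℝ => D p.1 p.2) zeroPlusPair (nhds 1)) :
    ∃ ω > 0, ∀ ε δ : ℝ, 0 < ε → ε < ω → 0 < δ → δ < ω → 0 ≤ D ε δ ∧ D ε δ ≤ 3/2 := by
  have h2 : Set.Ioo (1/2 : ℝ) (3/2) ∈ nhds (1 : ℝ) := Ioo_mem_nhds (by norm_num) (by norm_num)
  have h3 := h h2
  rw [zeroPlusPair, Filter.mem_map, Filter.mem_prod_iff] at h3
  obtain ⟨s, hs, t, ht, hst⟩ := h3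
  rw [mem_nhdsGT_iff_exists_Ioo_subset] at hs ht
  obtain ⟨u, hu, hus⟩ := hs
  obtain ⟨v, hv, hvt⟩ := ht
  refine ⟨min u v, lt_min hu hv, fun ε δ h1 h2' h3' h4' => ?_⟩
  have hm : (ε, δ) ∈ s ×ˢ t := by
    constructor
    · exact hus ⟨h1, lt_of_lt_of_le h2' (min_le_left _ _)⟩
    · exact hvt ⟨h3', lt_of_lt_of_le h4' (min_le_right _ _)⟩
  have hDm : D ε δ ∈ Set.Ioo (1/2 : ℝ) (3/2) := hst hm
  exact ⟨by linarith [hDm.1], le_of_lt hDm.2⟩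
section GoraJ

variable {ε δ : ℝ}

lemma K_bounds {Kc D1 D2 D3 D4 γ : ℝ} (hε : 0 < ε) (hδ : 0 < δ)
    (hγ : 0 < γ) (hγ5 : γ ≤ 1/5) (hεγ : ε < γ) (hδγ : δ < γ)
    (hD1 : 0 ≤ D1) (hD1' : D1 ≤ 3/2) (hD2 : 0 ≤ D2) (hD2' : D2 ≤ 3/2)
    (hD3 : 0 ≤ D3) (hD3' : D3 ≤ 3/2) (hD4 : 0 ≤ D4) (hD4' : D4 ≤ 3/2)
    (hK : 0 < Kc)
    (hint : (∫ x in Set.Icc (0:ℝ) 1, goraDensity Kc D1 D2 D3 D4 ε δ x) = 1) :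
    1 ≤ Kc ∧ Kc ≤ 1 + 3*(ε+δ)/γ + 12*γ := by
  haveI hfin : IsFiniteMeasure (volume.restrict (Set.Icc (0:ℝ) 1)) :=
    ⟨by rw [Measure.restrict_apply_univ, Real.volume_Icc]; exact ENNReal.ofReal_lt_top⟩
  set G : ℝ → ℝ := fun x =>
    1 + D1 * Tgd1 ε δ x + D2 * Tgd2 ε δ x + D3 * Tgd3 ε δ x + D4 * Tgd4 ε δ x with hGdef
  have hGS : ∀ x, G x = 1 + (D1 * Tgd1 ε δ x + D2 * Tgd2 ε δ x + D3 * Tgd3 ε δ x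
      + D4 * Tgd4 ε δ x) := fun x => by rw [hGdef]; ring
  have hIG : (∫ x in Set.Icc (0:ℝ) 1, G x) = Kc := by
    have h1 : (∫ x in Set.Icc (0:ℝ) 1, goraDensity Kc D1 D2 D3 D4 ε δ x)
        = Kc⁻¹ * ∫ x in Set.Icc (0:ℝ) 1, G x := by
      simp only [goraDensity_eq]
      exact integral_const_mul _ _
    rw [h1] at hint
    field_simp at hint
    linarith
  have hInt : Integrable G (volume.restrict (Set.Icc (0:ℝ) 1)) := by
    by_contra hc
    rw [MeasureTheory.integral_undef hc] at hIG
    linarith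
  have hone : (∫ _x in Set.Icc (0:ℝ) 1, (1:ℝ)) = 1 := by
    rw [integral_const, measureReal_restrict_apply_univ, Real.volume_real_Icc]
    simp
  constructor
  · have hmono := integral_mono_of_nonneg (f := fun _ => (1:ℝ)) (g := G)
      (μ := volume.restrict (Set.Icc (0:ℝ) 1))
      (Filter.Eventually.of_forall (fun x => by norm_num)) hInt
      (Filter.Eventually.of_forall (fun x => by
        have hS := Sgd_nonneg (ε := ε) (δ := δ) (x := x) hD1 hD2 hD3 hD4
        show (1:ℝ) ≤ G x
        rw [hGS x]; linarith))
    rw [hone] at hmono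
    rw [← hIG]; exact hmono
  · set g : ℝ → ℝ := fun x => (1 + 3*(ε+δ)/γ)
      + ((Set.Icc (0:ℝ) γ).indicator (fun _ => (6:ℝ)) x
        + (Set.Icc (1-γ) (1:ℝ)).indicator (fun _ => (6:ℝ)) x) with hgdef
    have hind1 : Integrable ((Set.Icc (0:ℝ) γ).indicator (fun _ => (6:ℝ)))
        (volume.restrict (Set.Icc (0:ℝ) 1)) :=
      (integrable_indicator_iff measurableSet_Icc).mpr
        ((integrableOn_const_iff).mpr (Or.inr (measure_lt_top _ _)))
    have hind2 : Integrable ((Set.Icc (1-γ) (1:ℝ)).indicator (fun _ => (6:ℝ)))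
        (volume.restrict (Set.Icc (0:ℝ) 1)) :=
      (integrable_indicator_iff measurableSet_Icc).mpr
        ((integrableOn_const_iff).mpr (Or.inr (measure_lt_top _ _)))
    have hg : Integrable g (volume.restrict (Set.Icc (0:ℝ) 1)) :=
      (integrable_const _).add (hind1.add hind2)
    have hle : ∀ x ∈ Set.Icc (0:ℝ) 1, G x ≤ g x := by
      intro x hx
      have hnn1 : 0 ≤ (Set.Icc (0:ℝ) γ).indicator (fun _ => (6:ℝ)) x :=
        Set.indicator_nonneg (fun _ _ => by norm_num) x
      have hnn2 : 0 ≤ (Set.Icc (1-γ) (1:ℝ)).indicator (fun _ => (6:ℝ)) x :=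
        Set.indicator_nonneg (fun _ _ => by norm_num) x
      have hratio : 0 ≤ 3*(ε+δ)/γ := by positivity
      by_cases hmem : γ ≤ x ∧ x ≤ 1 - γ
      · have hS := Sgd_bound hε hδ hγ hγ5 hεγ hδγ hmem.1 hmem.2
          hD1 hD1' hD2 hD2' hD3 hD3' hD4 hD4'
        rw [hGS x, hgdef]
        simp only
        linarith
      · push_neg at hmem
        have hS6 := Sgd_le_six (ε := ε) (δ := δ) (x := x) hε hδ
          hD1 hD1' hD2 hD2' hD3 hD3' hD4 hD4'
        rcases lt_or_ge x γ with hxγ | hxγ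
        · have hmem1 : x ∈ Set.Icc (0:ℝ) γ := ⟨hx.1, le_of_lt hxγ⟩
          rw [hGS x, hgdef]
          simp only [Set.indicator_of_mem hmem1]
          linarith
        · have hx2 : 1 - γ < x := hmem hxγ
          have hmem2 : x ∈ Set.Icc (1-γ) (1:ℝ) := ⟨le_of_lt hx2, hx.2⟩
          rw [hGS x, hgdef]
          simp only [Set.indicator_of_mem hmem2]
          linarith
    have hup := integral_mono_of_nonneg (f := G) (g := g)
      (μ := volume.restrict (Set.Icc (0:ℝ) 1))
      (Filter.Eventually.of_forall (fun x => by
        have hS := Sgd_nonneg (ε := ε) (δ := δ) (x := x) hD1 hD2 hD3 hD4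
        show (0:ℝ) ≤ G x
        rw [hGS x]; linarith)) hg
      (Filter.eventually_of_mem (self_mem_ae_restrict measurableSet_Icc) hle)
    have hμ1 : (volume.restrict (Set.Icc (0:ℝ) 1)) (Set.Icc (0:ℝ) γ)
        = ENNReal.ofReal γ := by
      rw [Measure.restrict_apply measurableSet_Icc,
        Set.inter_eq_left.mpr (Set.Icc_subset_Icc le_rfl (by linarith)), Real.volume_Icc]
      norm_num
    have hμ2 : (volume.restrict (Set.Icc (0:ℝ) 1)) (Set.Icc (1-γ) (1:ℝ))
        = ENNReal.ofReal γ := by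
      rw [Measure.restrict_apply measurableSet_Icc,
        Set.inter_eq_left.mpr (Set.Icc_subset_Icc (by linarith) le_rfl), Real.volume_Icc]
      norm_num
    have hadd : Integrable (fun x => (Set.Icc (0:ℝ) γ).indicator (fun _ => (6:ℝ)) x
        + (Set.Icc (1-γ) (1:ℝ)).indicator (fun _ => (6:ℝ)) x)
        (volume.restrict (Set.Icc (0:ℝ) 1)) := hind1.add hind2
    have h3 : (∫ x in Set.Icc (0:ℝ) 1, g x)
        = (∫ _x in Set.Icc (0:ℝ) 1, (1 + 3*(ε+δ)/γ))
          + ∫ x in Set.Icc (0:ℝ) 1, ((Set.Icc (0:ℝ) γ).indicator (fun _ => (6:ℝ)) x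
            + (Set.Icc (1-γ) (1:ℝ)).indicator (fun _ => (6:ℝ)) x) :=
      integral_add (integrable_const _) hadd
    have h4 : (∫ x in Set.Icc (0:ℝ) 1, ((Set.Icc (0:ℝ) γ).indicator (fun _ => (6:ℝ)) x
          + (Set.Icc (1-γ) (1:ℝ)).indicator (fun _ => (6:ℝ)) x))
        = (∫ x in Set.Icc (0:ℝ) 1, (Set.Icc (0:ℝ) γ).indicator (fun _ => (6:ℝ)) x)
          + ∫ x in Set.Icc (0:ℝ) 1, (Set.Icc (1-γ) (1:ℝ)).indicator (fun _ => (6:ℝ)) x :=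
      integral_add hind1 hind2
    have h5 : (∫ x in Set.Icc (0:ℝ) 1, (Set.Icc (0:ℝ) γ).indicator (fun _ => (6:ℝ)) x)
        = 6 * γ := by
      rw [integral_indicator_const (6:ℝ) measurableSet_Icc, measureReal_def, hμ1,
        ENNReal.toReal_ofReal (le_of_lt hγ)]
      rw [smul_eq_mul]; ring
    have h6 : (∫ x in Set.Icc (0:ℝ) 1, (Set.Icc (1-γ) (1:ℝ)).indicator (fun _ => (6:ℝ)) x)
        = 6 * γ := by
      rw [integral_indicator_const (6:ℝ) measurableSet_Icc, measureReal_def, hμ2,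
        ENNReal.toReal_ofReal (le_of_lt hγ)]
      rw [smul_eq_mul]; ring
    have h7 : (∫ _x in Set.Icc (0:ℝ) 1, (1 + 3*(ε+δ)/γ)) = 1 + 3*(ε+δ)/γ := by
      rw [integral_const, measureReal_restrict_apply_univ, Real.volume_real_Icc]
      norm_num
    have hgval : (∫ x in Set.Icc (0:ℝ) 1, g x) = (1 + 3*(ε+δ)/γ) + (6*γ + 6*γ) := by
      rw [h3, h4, h5, h6, h7]
    rw [← hIG]
    calc (∫ x in Set.Icc (0:ℝ) 1, G x) ≤ ∫ x in Set.Icc (0:ℝ) 1, g x := hup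
      _ = (1 + 3*(ε+δ)/γ) + (6*γ + 6*γ) := hgval
      _ = 1 + 3*(ε+δ)/γ + 12*γ := by ring

end GoraJ
/-- **Corollary 4.2.** The invariant density `f_i(·; ε, δ)` converges to `1` uniformly on
`[d, 1-d]` as `ε, δ → 0⁺`, for every `d > 0`. -/
theorem invariant_density_tendsto_one_uniformly
    (K D1L D2L D1R D2R : ℝ → ℝ → ℝ)
    (hD1L : Filter.Tendsto (fun p : ℝ × ℝ => D1L p.1 p.2) zeroPlusPair (nhds 1))
    (hD2L : Filter.Tendsto (fun p : ℝ × ℝ => D2L p.1 p.2) zeroPlusPair (nhds 1))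
    (hD1R : Filter.Tendsto (fun p : ℝ × ℝ => D1R p.1 p.2) zeroPlusPair (nhds 1))
    (hD2R : Filter.Tendsto (fun p : ℝ × ℝ => D2R p.1 p.2) zeroPlusPair (nhds 1))
    (hdensity : ∀ ε δ : ℝ, 0 < ε → 0 < δ →
      0 < K ε δ ∧
      (∀ x ∈ Set.Icc (0 : ℝ) 1,
        0 ≤ goraDensity (K ε δ) (D1L ε δ) (D2L ε δ) (D1R ε δ) (D2R ε δ) ε δ x) ∧
      (∫ x in Set.Icc (0 : ℝ) 1,
        goraDensity (K ε δ) (D1L ε δ) (D2L ε δ) (D1R ε δ) (D2R ε δ) ε δ x) = 1 ∧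
      (∀ s : Set ℝ, MeasurableSet s →
        ((volume.restrict (Set.Icc (0 : ℝ) 1)).withDensity
            (fun x => ENNReal.ofReal
              (goraDensity (K ε δ) (D1L ε δ) (D2L ε δ) (D1R ε δ) (D2R ε δ) ε δ x)))
          ((FrMap ε δ) ⁻¹' s)
        = ((volume.restrict (Set.Icc (0 : ℝ) 1)).withDensity
            (fun x => ENNReal.ofReal
              (goraDensity (K ε δ) (D1L ε δ) (D2L ε δ) (D1R ε δ) (D2R ε δ) ε δ x))) s)) :
    ∀ d : ℝ, 0 < d → ∀ μ : ℝ, 0 < μ → ∃ ω : ℝ, 0 < ω ∧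
      ∀ ε δ : ℝ, 0 < ε → ε < ω → 0 < δ → δ < ω →
        (⨆ x : Set.Icc d (1 - d),
          |goraDensity (K ε δ) (D1L ε δ) (D2L ε δ) (D1R ε δ) (D2R ε δ) ε δ (x : ℝ) - 1|) < μ := by
  obtain ⟨ω1, hω1, hB1⟩ := D_window hD1L
  obtain ⟨ω2, hω2, hB2⟩ := D_window hD2L
  obtain ⟨ω3, hω3, hB3⟩ := D_window hD1R
  obtain ⟨ω4, hω4, hB4⟩ := D_window hD2R
  intro d hd μ hμ
  set d0 : ℝ := min d (1/5) with hd0def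
  have hd0 : 0 < d0 := lt_min hd (by norm_num)
  have hd05 : d0 ≤ 1/5 := min_le_right _ _
  have hd0d : d0 ≤ d := min_le_left _ _
  set γ : ℝ := min (1/5) (μ/48) with hγdef
  have hγ : 0 < γ := lt_min (by norm_num) (by positivity)
  have hγ5 : γ ≤ 1/5 := min_le_left _ _
  have hγμ : γ ≤ μ/48 := min_le_right _ _
  set W : ℝ := min (min ω1 (min ω2 (min ω3 ω4)))
    (min (min γ d0) (min (μ*γ/24) (μ*d0/24))) with hWdef
  have hW : 0 < W :=
    lt_min (lt_min hω1 (lt_min hω2 (lt_min hω3 hω4)))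
      (lt_min (lt_min hγ hd0) (lt_min (by positivity) (by positivity)))
  refine ⟨W, hW, ?_⟩
  intro ε δ hε hεω hδ hδω
  have l1 : W ≤ ω1 := (min_le_left _ _).trans (min_le_left _ _)
  have l2 : W ≤ ω2 := (min_le_left _ _).trans ((min_le_right _ _).trans (min_le_left _ _))
  have l3 : W ≤ ω3 := (min_le_left _ _).trans
    ((min_le_right _ _).trans ((min_le_right _ _).trans (min_le_left _ _)))
  have l4 : W ≤ ω4 := (min_le_left _ _).trans
    ((min_le_right _ _).trans ((min_le_right _ _).trans (min_le_right _ _)))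
  have l5 : W ≤ γ := (min_le_right _ _).trans ((min_le_left _ _).trans (min_le_left _ _))
  have l6 : W ≤ d0 := (min_le_right _ _).trans ((min_le_left _ _).trans (min_le_right _ _))
  have l7 : W ≤ μ*γ/24 := (min_le_right _ _).trans
    ((min_le_right _ _).trans (min_le_left _ _))
  have l8 : W ≤ μ*d0/24 := (min_le_right _ _).trans
    ((min_le_right _ _).trans (min_le_right _ _))
  have hεγ : ε < γ := hεω.trans_le l5
  have hδγ : δ < γ := hδω.trans_le l5
  have hεd0 : ε < d0 := hεω.trans_le l6
  have hδd0 : δ < d0 := hδω.trans_le l6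
  obtain ⟨hK, _hnn, hint, _hinv⟩ := hdensity ε δ hε hδ
  have hb1 := hB1 ε δ hε (hεω.trans_le l1) hδ (hδω.trans_le l1)
  have hb2 := hB2 ε δ hε (hεω.trans_le l2) hδ (hδω.trans_le l2)
  have hb3 := hB3 ε δ hε (hεω.trans_le l3) hδ (hδω.trans_le l3)
  have hb4 := hB4 ε δ hε (hεω.trans_le l4) hδ (hδω.trans_le l4)
  have hKb := K_bounds hε hδ hγ hγ5 hεγ hδγ hb1.1 hb1.2 hb2.1 hb2.2
    hb3.1 hb3.2 hb4.1 hb4.2 hK hint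
  have hbound : ∀ x : Set.Icc d (1-d),
      |goraDensity (K ε δ) (D1L ε δ) (D2L ε δ) (D1R ε δ) (D2R ε δ) ε δ (x : ℝ) - 1|
        ≤ 3*μ/4 := by
    intro x
    obtain ⟨hx1, hx2⟩ := x.2
    have hx1' : d0 ≤ (x : ℝ) := le_trans hd0d hx1
    have hx2' : (x : ℝ) ≤ 1 - d0 := le_trans hx2 (by linarith)
    set S : ℝ := D1L ε δ * Tgd1 ε δ (x : ℝ) + D2L ε δ * Tgd2 ε δ (x : ℝ)
      + D1R ε δ * Tgd3 ε δ (x : ℝ) + D2R ε δ * Tgd4 ε δ (x : ℝ) with hSdef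
    have hS0 : 0 ≤ S := Sgd_nonneg hb1.1 hb2.1 hb3.1 hb4.1
    have hSb : S ≤ 3*(ε+δ)/d0 := Sgd_bound hε hδ hd0 hd05 hεd0 hδd0 hx1' hx2'
      hb1.1 hb1.2 hb2.1 hb2.2 hb3.1 hb3.2 hb4.1 hb4.2
    have hdens : goraDensity (K ε δ) (D1L ε δ) (D2L ε δ) (D1R ε δ) (D2R ε δ) ε δ (x : ℝ)
        = (K ε δ)⁻¹ * (1 + S) := by
      rw [goraDensity_eq, hSdef]; ring
    have he : goraDensity (K ε δ) (D1L ε δ) (D2L ε δ) (D1R ε δ) (D2R ε δ) ε δ (x : ℝ) - 1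
        = (K ε δ)⁻¹ * ((1 + S) - K ε δ) := by
      rw [hdens, mul_sub, inv_mul_cancel₀ (ne_of_gt hK)]
    rw [he, abs_mul, abs_of_pos (inv_pos.mpr hK)]
    have habs : |(1 + S) - K ε δ| ≤ S + (K ε δ - 1) := by
      rw [abs_le]
      constructor
      · linarith [hKb.1]
      · linarith [hKb.1]
    have hKinv1 : (K ε δ)⁻¹ ≤ 1 := by
      have h := inv_anti₀ one_pos hKb.1
      simpa using h
    have e1 : 3*(ε+δ)/d0 ≤ μ/4 := by
      rw [div_le_iff₀ hd0]
      have hε8 : ε < μ*d0/24 := hεω.trans_le l8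
      have hδ8 : δ < μ*d0/24 := hδω.trans_le l8
      linarith
    have e2 : 3*(ε+δ)/γ ≤ μ/4 := by
      rw [div_le_iff₀ hγ]
      have hε7 : ε < μ*γ/24 := hεω.trans_le l7
      have hδ7 : δ < μ*γ/24 := hδω.trans_le l7
      linarith
    have e3 : 12*γ ≤ μ/4 := by linarith
    calc (K ε δ)⁻¹ * |1 + S - K ε δ| ≤ 1 * (S + (K ε δ - 1)) :=
          mul_le_mul hKinv1 habs (abs_nonneg _) (by norm_num)
      _ = S + (K ε δ - 1) := one_mul _
      _ ≤ 3*(ε+δ)/d0 + (3*(ε+δ)/γ + 12*γ) := by linarith [hKb.2]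
      _ ≤ 3*μ/4 := by linarith
  have hsup := Real.iSup_le hbound (by positivity)
  exact lt_of_le_of_lt hsup (by linarith)
end GoraB
end

section
/- For all ε, δ > 0 there exists a unique ν ∈ [0,2] such that the probability density f_c(·; ε, δ) on [0,1] defined by f_c = ν on (0, 1/2) and f_c = 2 − ν on (1/2, 1) satisfies P_{ε,δ}(f_c) = f_c. Moreover, ν = ν(ε, δ) → 1 as ε, δ → 0, so that f_c(·; ε, δ) → 1 uniformly on [0,1]. -/
open MeasureTheory Set Filter

/-- The un-normalised conditioned Frobenius–Perron operator of `F(·; ε, δ)`. -/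
noncomputable def FPpre (ε δ : ℝ) (f : ℝ → ℝ) (s : ℝ) : ℝ :=
  if s < 1 / 2 then
    f (s / (4 + ε)) / (4 + ε) + f (((3 + δ) / 2 - s) / (2 + δ)) / (2 + δ)
      + f ((s + 3 + δ) / (4 + δ)) / (4 + δ)
  else
    f (s / (4 + ε)) / (4 + ε) + f (((3 + ε) / 2 - s) / (2 + ε)) / (2 + ε)
      + f ((s + 3 + δ) / (4 + δ)) / (4 + δ)

/-- The Frobenius–Perron operator `P_{ε,δ}` of `F(·; ε, δ)` conditioned on staying in `[0,1]`,
normalised so that the image integrates to `1` over `[0,1]`. -/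
noncomputable def FPop (ε δ : ℝ) (f : ℝ → ℝ) (s : ℝ) : ℝ :=
  FPpre ε δ f s / ∫ u in Set.Icc (0 : ℝ) 1, FPpre ε δ f u

/-- The candidate conditionally invariant density: `ν` on `(0, 1/2)`, `2 - ν` on `(1/2, 1)`. -/
noncomputable def condDensity (ν s : ℝ) : ℝ := if s < 1 / 2 then ν else 2 - ν

/-- The sup-norm of a function over `[0,1]`. -/
noncomputable def supNorm01 (f : ℝ → ℝ) : ℝ := ⨆ s : Set.Icc (0 : ℝ) 1, |f (s : ℝ)|

/- ### Auxiliary definitions -/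

noncomputable def aa (ε : ℝ) : ℝ := 1/(4+ε)
noncomputable def bb (δ : ℝ) : ℝ := 1/(2+δ)+1/(4+δ)
noncomputable def cc (ε : ℝ) : ℝ := 1/(4+ε)+1/(2+ε)
noncomputable def dd (δ : ℝ) : ℝ := 1/(4+δ)
noncomputable def alphaC (ε δ : ℝ) : ℝ := aa ε + cc ε - bb δ - dd δ
noncomputable def betaC (ε δ : ℝ) : ℝ := 2*(2*bb δ + dd δ - aa ε)
noncomputable def nuFun (ε δ : ℝ) : ℝ :=
  8 * bb δ / (betaC ε δ + Real.sqrt ((betaC ε δ)^2 + 16 * alphaC ε δ * bb δ))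

/- ### Pointwise evaluation of the unnormalised operator -/

lemma FPpre_left {ε δ : ℝ} (hε : 0 < ε) (hδ : 0 < δ) (ν : ℝ) {s : ℝ}
    (h0 : 0 ≤ s) (h1 : s < 1/2) :
    FPpre ε δ (condDensity ν) s = ν * aa ε + (2 - ν) * bb δ := by
  have h4ε : (0:ℝ) < 4 + ε := by linarith
  have h2δ : (0:ℝ) < 2 + δ := by linarith
  have h4δ : (0:ℝ) < 4 + δ := by linarith
  have e1 : s / (4 + ε) < 1/2 := by rw [div_lt_iff₀ h4ε]; nlinarith
  have e2 : ¬ (((3 + δ) / 2 - s) / (2 + δ) < 1/2) := by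
    rw [not_lt, le_div_iff₀ h2δ]; nlinarith
  have e3 : ¬ ((s + 3 + δ) / (4 + δ) < 1/2) := by
    rw [not_lt, le_div_iff₀ h4δ]; nlinarith
  simp only [FPpre, condDensity, if_pos h1, if_pos e1, if_neg e2, if_neg e3, aa, bb]
  field_simp
  ring

lemma FPpre_right {ε δ : ℝ} (hε : 0 < ε) (hδ : 0 < δ) (ν : ℝ) {s : ℝ}
    (h0 : 1/2 < s) (h1 : s ≤ 1) :
    FPpre ε δ (condDensity ν) s = ν * cc ε + (2 - ν) * dd δ := by
  have h4ε : (0:ℝ) < 4 + ε := by linarith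
  have h2ε : (0:ℝ) < 2 + ε := by linarith
  have h4δ : (0:ℝ) < 4 + δ := by linarith
  have e1 : s / (4 + ε) < 1/2 := by rw [div_lt_iff₀ h4ε]; nlinarith
  have e2 : ((3 + ε) / 2 - s) / (2 + ε) < 1/2 := by
    rw [div_lt_iff₀ h2ε]; nlinarith
  have e3 : ¬ ((s + 3 + δ) / (4 + δ) < 1/2) := by
    rw [not_lt, le_div_iff₀ h4δ]; nlinarith
  simp only [FPpre, condDensity, if_neg (not_lt.mpr h0.le), if_pos e1, if_pos e2, if_neg e3,
    cc, dd]
  field_simp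

/- ### The integral of the unnormalised operator over `[0,1]` -/

lemma integral_FPpre {ε δ : ℝ} (hε : 0 < ε) (hδ : 0 < δ) (ν : ℝ) :
    ∫ u in Set.Icc (0:ℝ) 1, FPpre ε δ (condDensity ν) u
      = (ν * aa ε + (2 - ν) * bb δ)/2 + (ν * cc ε + (2 - ν) * dd δ)/2 := by
  set L := ν * aa ε + (2 - ν) * bb δ with hL
  set R := ν * cc ε + (2 - ν) * dd δ with hR
  have hl : ∀ s ∈ Ico (0:ℝ) (1/2), FPpre ε δ (condDensity ν) s = L :=
    fun s hs => FPpre_left hε hδ ν hs.1 hs.2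
  have hr : ∀ s ∈ Ioc (1/2:ℝ) 1, FPpre ε δ (condDensity ν) s = R :=
    fun s hs => FPpre_right hε hδ ν hs.1 hs.2
  have hunion : Icc (0:ℝ) 1 = Ico 0 (1/2) ∪ Icc (1/2) 1 :=
    (Set.Ico_union_Icc_eq_Icc (by norm_num) (by norm_num)).symm
  have hdisj : Disjoint (Ico (0:ℝ) (1/2)) (Icc (1/2) 1) := by
    rw [Set.disjoint_left]; intro x hx hx'; exact absurd hx'.1 (not_le.mpr hx.2)
  have hint1 : ∫ u in Ico (0:ℝ) (1/2), FPpre ε δ (condDensity ν) u = L/2 := by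
    rw [setIntegral_congr_fun measurableSet_Ico (fun x hx => hl x hx),
      setIntegral_const, Real.volume_real_Ico_of_le (by norm_num), smul_eq_mul]
    ring
  have hint2 : ∫ u in Icc (1/2:ℝ) 1, FPpre ε δ (condDensity ν) u = R/2 := by
    rw [integral_Icc_eq_integral_Ioc,
      setIntegral_congr_fun measurableSet_Ioc (fun x hx => hr x hx),
      setIntegral_const, Real.volume_real_Ioc_of_le (by norm_num), smul_eq_mul]
    ring
  have hi1 : IntegrableOn (FPpre ε δ (condDensity ν)) (Ico (0:ℝ) (1/2)) := by
    apply ((integrableOn_const_iff (C := L)).mpr (Or.inr ?_)).congr_fun (fun x hx => (hl x hx).symm)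
      measurableSet_Ico
    rw [Real.volume_Ico]; exact ENNReal.ofReal_lt_top
  have hi2 : IntegrableOn (FPpre ε δ (condDensity ν)) (Icc (1/2:ℝ) 1) := by
    rw [integrableOn_Icc_iff_integrableOn_Ioc]
    apply ((integrableOn_const_iff (C := R)).mpr (Or.inr ?_)).congr_fun (fun x hx => (hr x hx).symm)
      measurableSet_Ioc
    rw [Real.volume_Ioc]; exact ENNReal.ofReal_lt_top
  rw [hunion, setIntegral_union hdisj measurableSet_Icc hi1 hi2, hint1, hint2]

/- ### Facts about the coefficients and the quadratic -/

lemma abcd_pos {ε δ : ℝ} (hε : 0 < ε) (hδ : 0 < δ) :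
    0 < aa ε ∧ 0 < bb δ ∧ 0 < cc ε ∧ 0 < dd δ := by
  unfold aa bb cc dd
  refine ⟨by positivity, by positivity, by positivity, by positivity⟩

lemma disc_eq (ε δ : ℝ) : (betaC ε δ)^2 + 16 * alphaC ε δ * bb δ
    = 4*((aa ε - dd δ)^2 + 4 * bb δ * cc ε) := by
  unfold alphaC betaC; ring

lemma den_pos {ε δ : ℝ} (hε : 0 < ε) (hδ : 0 < δ) :
    0 < betaC ε δ + Real.sqrt ((betaC ε δ)^2 + 16 * alphaC ε δ * bb δ) := by
  obtain ⟨ha, hb, hc, hd⟩ := abcd_pos hε hδ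
  set β := betaC ε δ with hβ
  set D := β^2 + 16 * alphaC ε δ * bb δ with hDdef
  have hD : 0 < D := by rw [hDdef, disc_eq]; positivity
  have ht0 : 0 ≤ Real.sqrt D := Real.sqrt_nonneg _
  have ht2 : (Real.sqrt D)^2 = D := Real.sq_sqrt hD.le
  rcases le_or_gt β 0 with h | h
  · have hα : 0 < alphaC ε δ := by
      have : aa ε ≥ 2 * bb δ + dd δ := by unfold betaC at hβ; nlinarith [hβ]
      unfold alphaC; nlinarith
    nlinarith [ht2, mul_pos hα hb]
  · linarith

lemma nuFun_root {ε δ : ℝ} (hε : 0 < ε) (hδ : 0 < δ) :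
    alphaC ε δ * (nuFun ε δ)^2 + betaC ε δ * nuFun ε δ - 4 * bb δ = 0 := by
  obtain ⟨ha, hb, hc, hd⟩ := abcd_pos hε hδ
  have hD : 0 < (betaC ε δ)^2 + 16 * alphaC ε δ * bb δ := by rw [disc_eq]; positivity
  have ht2 : (Real.sqrt ((betaC ε δ)^2 + 16 * alphaC ε δ * bb δ))^2
      = (betaC ε δ)^2 + 16 * alphaC ε δ * bb δ := Real.sq_sqrt hD.le
  have hden := den_pos hε hδ
  rw [nuFun]
  generalize Real.sqrt ((betaC ε δ)^2 + 16 * alphaC ε δ * bb δ) = S at ht2 hden ⊢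
  field_simp
  linear_combination (-(4 * bb δ)) * ht2

lemma nuFun_mem {ε δ : ℝ} (hε : 0 < ε) (hδ : 0 < δ) :
    0 < nuFun ε δ ∧ nuFun ε δ < 2 := by
  obtain ⟨ha, hb, hc, hd⟩ := abcd_pos hε hδ
  have hden := den_pos hε hδ
  constructor
  · rw [nuFun]; positivity
  · rw [nuFun, div_lt_iff₀ hden]
    have hD : 0 < (betaC ε δ)^2 + 16 * alphaC ε δ * bb δ := by rw [disc_eq]; positivity
    have ht2 : (Real.sqrt ((betaC ε δ)^2 + 16 * alphaC ε δ * bb δ))^2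
        = (betaC ε δ)^2 + 16 * alphaC ε δ * bb δ := Real.sq_sqrt hD.le
    have ht0 : 0 ≤ Real.sqrt ((betaC ε δ)^2 + 16 * alphaC ε δ * bb δ) := Real.sqrt_nonneg _
    rcases le_or_gt (4 * bb δ - betaC ε δ) 0 with h | h
    · nlinarith
    · have key : (4 * bb δ - betaC ε δ)^2
          < (Real.sqrt ((betaC ε δ)^2 + 16 * alphaC ε δ * bb δ))^2 := by
        rw [ht2]
        have hid : (betaC ε δ)^2 + 16*alphaC ε δ * bb δ - (4*bb δ - betaC ε δ)^2
            = 16 * bb δ * cc ε := by unfold alphaC betaC; ring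
        nlinarith [mul_pos hb hc]
      nlinarith

lemma root_unique {ε δ : ℝ} (hε : 0 < ε) (hδ : 0 < δ) {x y : ℝ}
    (hx : x ∈ Set.Icc (0:ℝ) 2) (hy : y ∈ Set.Icc (0:ℝ) 2)
    (hgx : alphaC ε δ * x^2 + betaC ε δ * x - 4 * bb δ = 0)
    (hgy : alphaC ε δ * y^2 + betaC ε δ * y - 4 * bb δ = 0) : x = y := by
  obtain ⟨ha, hb, hc, hd⟩ := abcd_pos hε hδ
  by_contra hne
  have hfac : (x - y) * (alphaC ε δ * (x + y) + betaC ε δ) = 0 := by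
    linear_combination hgx - hgy
  have hαβ : alphaC ε δ * (x + y) + betaC ε δ = 0 :=
    (mul_eq_zero.mp hfac).resolve_left (sub_ne_zero.mpr hne)
  have h1 : alphaC ε δ * (x * y) = -(4 * bb δ) := by linear_combination x * hαβ - hgx
  have hsum : 4 * alphaC ε δ + 2 * betaC ε δ - 4 * bb δ = 4 * cc ε := by
    unfold alphaC betaC; ring
  have h2 : alphaC ε δ * ((2 - x) * (2 - y)) = 4 * cc ε := by
    linear_combination hsum + h1 - 2 * hαβ
  have p1 : 0 ≤ x * y := mul_nonneg hx.1 hy.1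
  have p2 : 0 ≤ (2 - x) * (2 - y) := mul_nonneg (by linarith [hx.2]) (by linarith [hy.2])
  have h3 : 4 * cc ε * (x * y) + 4 * bb δ * ((2 - x) * (2 - y)) = 0 := by
    linear_combination ((2 - x) * (2 - y)) * h1 - (x * y) * h2
  have hP1 : x * y ≤ 0 := by nlinarith [h3, mul_nonneg hb.le p2, hc]
  have hP : x * y = 0 := le_antisymm hP1 p1
  rw [hP, mul_zero] at h1
  linarith

lemma LR_pos {ε δ : ℝ} (hε : 0 < ε) (hδ : 0 < δ) {ν : ℝ} (hν : ν ∈ Set.Icc (0:ℝ) 2) :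
    0 < ν * aa ε + (2 - ν) * bb δ ∧ 0 < ν * cc ε + (2 - ν) * dd δ := by
  obtain ⟨ha, hb, hc, hd⟩ := abcd_pos hε hδ
  obtain ⟨h0, h2⟩ := hν
  constructor
  · rcases le_total ν 1 with h | h
    · nlinarith
    · nlinarith
  · rcases le_total ν 1 with h | h
    · nlinarith
    · nlinarith

/-- For `ν' ∈ [0,2]`, the fixed point property is equivalent to the quadratic. -/
lemma fixed_point_iff {ε δ : ℝ} (hε : 0 < ε) (hδ : 0 < δ) {ν : ℝ}
    (hν : ν ∈ Set.Icc (0:ℝ) 2) :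
    (∀ s ∈ Set.Ioo (0 : ℝ) (1 / 2) ∪ Set.Ioo (1 / 2 : ℝ) 1,
        FPop ε δ (condDensity ν) s = condDensity ν s)
      ↔ alphaC ε δ * ν^2 + betaC ε δ * ν - 4 * bb δ = 0 := by
  obtain ⟨hL, hR⟩ := LR_pos hε hδ hν
  set L := ν * aa ε + (2 - ν) * bb δ with hLdef
  set R := ν * cc ε + (2 - ν) * dd δ with hRdef
  have hI : ∫ u in Set.Icc (0:ℝ) 1, FPpre ε δ (condDensity ν) u = L/2 + R/2 :=
    integral_FPpre hε hδ ν
  have hIpos : 0 < L/2 + R/2 := by linarith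
  constructor
  · intro hfix
    have h1 := hfix (1/4) (Or.inl ⟨by norm_num, by norm_num⟩)
    rw [FPop, hI, FPpre_left hε hδ ν (by norm_num) (by norm_num),
      condDensity, if_pos (by norm_num : (1/4:ℝ) < 1/2), div_eq_iff hIpos.ne'] at h1
    rw [hLdef, hRdef] at h1
    unfold alphaC betaC
    linear_combination (-2 : ℝ) * h1
  · intro hg s hs
    unfold alphaC betaC at hg
    rcases hs with hs | hs
    · rw [FPop, hI, FPpre_left hε hδ ν hs.1.le hs.2,
        condDensity, if_pos hs.2, div_eq_iff hIpos.ne', hLdef, hRdef]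
      linear_combination (-(1:ℝ)/2) * hg
    · rw [FPop, hI, FPpre_right hε hδ ν hs.1 hs.2.le,
        condDensity, if_neg (not_lt.mpr hs.1.le), div_eq_iff hIpos.ne', hLdef, hRdef]
      linear_combination ((1:ℝ)/2) * hg

/- ### The limit `ν(ε,δ) → 1` -/

lemma sqrt_nine : Real.sqrt 9 = 3 := by
  rw [show (9:ℝ) = 3^2 by norm_num, Real.sqrt_sq (by norm_num)]

lemma nuFun_zero : nuFun 0 0 = 1 := by
  have h : alphaC 0 0 = 0 := by unfold alphaC aa bb cc dd; norm_num
  have hβ : betaC 0 0 = 3 := by unfold betaC aa bb dd; norm_num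
  have hb : bb 0 = 3/4 := by unfold bb; norm_num
  rw [nuFun, h, hβ, hb]
  norm_num [sqrt_nine]

lemma nuFun_continuousAt : ContinuousAt (fun p : ℝ × ℝ => nuFun p.1 p.2) (0, 0) := by
  have haa : ContinuousAt (fun p : ℝ × ℝ => aa p.1) (0, 0) := by
    unfold aa
    exact (continuousAt_const.div (by fun_prop) (by norm_num))
  have hbb : ContinuousAt (fun p : ℝ × ℝ => bb p.2) (0, 0) := by
    unfold bb
    exact (continuousAt_const.div (by fun_prop) (by norm_num)).add
      (continuousAt_const.div (by fun_prop) (by norm_num))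
  have hcc : ContinuousAt (fun p : ℝ × ℝ => cc p.1) (0, 0) := by
    unfold cc
    exact (continuousAt_const.div (by fun_prop) (by norm_num)).add
      (continuousAt_const.div (by fun_prop) (by norm_num))
  have hdd : ContinuousAt (fun p : ℝ × ℝ => dd p.2) (0, 0) := by
    unfold dd
    exact continuousAt_const.div (by fun_prop) (by norm_num)
  have halpha : ContinuousAt (fun p : ℝ × ℝ => alphaC p.1 p.2) (0, 0) := by
    unfold alphaC; exact ((haa.add hcc).sub hbb).sub hdd
  have hbeta : ContinuousAt (fun p : ℝ × ℝ => betaC p.1 p.2) (0, 0) := by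
    unfold betaC
    exact continuousAt_const.mul (((continuousAt_const.mul hbb).add hdd).sub haa)
  have hsqrt : ContinuousAt
      (fun p : ℝ × ℝ => Real.sqrt ((betaC p.1 p.2)^2 + 16 * alphaC p.1 p.2 * bb p.2)) (0, 0) :=
    Real.continuous_sqrt.continuousAt.comp
      ((hbeta.pow 2).add ((continuousAt_const.mul halpha).mul hbb))
  have hden : ContinuousAt
      (fun p : ℝ × ℝ => betaC p.1 p.2
        + Real.sqrt ((betaC p.1 p.2)^2 + 16 * alphaC p.1 p.2 * bb p.2)) (0, 0) :=
    hbeta.add hsqrt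
  have hdenne : (fun p : ℝ × ℝ => betaC p.1 p.2
      + Real.sqrt ((betaC p.1 p.2)^2 + 16 * alphaC p.1 p.2 * bb p.2)) (0, 0) ≠ 0 := by
    have h : alphaC 0 0 = 0 := by unfold alphaC aa bb cc dd; norm_num
    have hβ : betaC 0 0 = 3 := by unfold betaC aa bb dd; norm_num
    simp only [h, hβ]
    norm_num [sqrt_nine]
  exact (continuousAt_const.mul hbb).div hden hdenne

lemma nuFun_tendsto : Tendsto (fun p : ℝ × ℝ => nuFun p.1 p.2)
    ((nhdsWithin 0 (Set.Ioi 0)) ×ˢ (nhdsWithin 0 (Set.Ioi 0))) (nhds 1) := by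
  have h1 : Tendsto (fun p : ℝ × ℝ => nuFun p.1 p.2) (nhds (0, 0)) (nhds 1) := by
    have := nuFun_continuousAt
    rw [ContinuousAt, nuFun_zero] at this
    exact this
  apply h1.mono_left
  rw [nhds_prod_eq]
  exact Filter.prod_mono nhdsWithin_le_nhds nhdsWithin_le_nhds

/- ### Sup norm of the candidate density minus one -/

lemma supNorm_condDensity (ν : ℝ) : supNorm01 (fun s => condDensity ν s - 1) = |ν - 1| := by
  have : Nonempty (Set.Icc (0:ℝ) 1) := ⟨⟨0, by norm_num⟩⟩
  unfold supNorm01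
  have h : (fun s : Set.Icc (0:ℝ) 1 => |condDensity ν (s:ℝ) - 1|)
      = fun _ : Set.Icc (0:ℝ) 1 => |ν - 1| := by
    funext s
    by_cases hs : (s:ℝ) < 1/2
    · rw [condDensity, if_pos hs]
    · simp only [condDensity, if_neg hs]
      rw [show (2 - ν - 1 : ℝ) = -(ν - 1) by ring, abs_neg]
  rw [h, ciSup_const]

/- ### Main theorem -/

/-- **Lemma 4.3.** For all `ε, δ > 0` there is a unique `ν ∈ [0,2]` such that the density
equal to `ν` on `(0,1/2)` and `2 - ν` on `(1/2,1)` is a fixed point of the conditioned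
Frobenius–Perron operator `P_{ε,δ}`; moreover `ν(ε, δ) → 1` as `ε, δ → 0⁺`, so that the
conditionally invariant density converges to `1` uniformly on `[0,1]`. -/
theorem conditionally_invariant_density_exists_unique :
    ∃ ν : ℝ → ℝ → ℝ,
      (∀ ε δ : ℝ, 0 < ε → 0 < δ →
        ν ε δ ∈ Set.Icc (0 : ℝ) 2 ∧
        (∀ s ∈ Set.Ioo (0 : ℝ) (1 / 2) ∪ Set.Ioo (1 / 2 : ℝ) 1,
          FPop ε δ (condDensity (ν ε δ)) s = condDensity (ν ε δ) s) ∧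
        (∀ ν' ∈ Set.Icc (0 : ℝ) 2,
          (∀ s ∈ Set.Ioo (0 : ℝ) (1 / 2) ∪ Set.Ioo (1 / 2 : ℝ) 1,
            FPop ε δ (condDensity ν') s = condDensity ν' s) → ν' = ν ε δ)) ∧
      Filter.Tendsto (fun p : ℝ × ℝ => ν p.1 p.2)
        ((nhdsWithin 0 (Set.Ioi 0)) ×ˢ (nhdsWithin 0 (Set.Ioi 0))) (nhds 1) ∧
      (∀ μ : ℝ, 0 < μ → ∃ ω : ℝ, 0 < ω ∧ ∀ ε δ : ℝ, 0 < ε → ε < ω → 0 < δ → δ < ω →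
        supNorm01 (fun s => condDensity (ν ε δ) s - 1) < μ) := by
  refine ⟨nuFun, ?_, nuFun_tendsto, ?_⟩
  · intro ε δ hε hδ
    obtain ⟨h0, h2⟩ := nuFun_mem hε hδ
    have hmem : nuFun ε δ ∈ Set.Icc (0:ℝ) 2 := ⟨h0.le, h2.le⟩
    refine ⟨hmem, (fixed_point_iff hε hδ hmem).mpr (nuFun_root hε hδ), ?_⟩
    intro ν' hmem' hfix
    exact root_unique hε hδ hmem' hmem ((fixed_point_iff hε hδ hmem').mp hfix)
      (nuFun_root hε hδ)
  · intro μ hμ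
    have hev : ∀ᶠ p in ((nhdsWithin (0:ℝ) (Set.Ioi 0)) ×ˢ (nhdsWithin (0:ℝ) (Set.Ioi 0))),
        dist (nuFun p.1 p.2) 1 < μ := (Metric.tendsto_nhds.mp nuFun_tendsto) μ hμ
    rw [Filter.eventually_prod_iff] at hev
    obtain ⟨pa, hpa, pb, hpb, hcomb⟩ := hev
    obtain ⟨ω₁, hω₁, hsub1⟩ := mem_nhdsGT_iff_exists_Ioo_subset.mp hpa
    obtain ⟨ω₂, hω₂, hsub2⟩ := mem_nhdsGT_iff_exists_Ioo_subset.mp hpb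
    refine ⟨min ω₁ ω₂, lt_min hω₁ hω₂, ?_⟩
    intro ε δ hε hεω hδ hδω
    have h1 : pa ε := hsub1 ⟨hε, lt_of_lt_of_le hεω (min_le_left _ _)⟩
    have h2 : pb δ := hsub2 ⟨hδ, lt_of_lt_of_le hδω (min_le_right _ _)⟩
    have := hcomb h1 h2
    rw [Real.dist_eq] at this
    rw [supNorm_condDensity]
    exact this
end

section
/- For every μ > 0 there exist ω > 0 and N ∈ ℕ such that for every x ∈ [0,2], every piecewise constant probability density k : [0,1] → [0,2] with k(t) = x for t ∈ (0, 1/2) and k(t) = 2 − x for t ∈ (1/2, 1), every n ≥ N, and all parameters 0 < ε, δ < ω, one has ‖P_{ε,δ}^n(k) − f_c(·; ε, δ)‖_∞ < μ, where f_c(·; ε, δ) is the conditionally invariant density. -/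
set_option maxHeartbeats 1000000
set_option linter.unusedSectionVars false
set_option linter.unusedVariables false


open MeasureTheory Set Filter

lemma ae_ne_half : ∀ᵐ u : ℝ, u ≠ 1/2 := by
  have h : {u : ℝ | ¬ u ≠ 1/2} = {(1/2 : ℝ)} := by ext u; simp
  rw [ae_iff, h]; exact Real.volume_singleton

lemma stepInt (a b : ℝ) : ∫ u in Icc (0:ℝ) 1, (if u < 1/2 then a else b) = (a+b)/2 := by
  rw [integral_Icc_eq_integral_Ioc,
    show Ioc (0:ℝ) 1 = Ioc 0 (1/2) ∪ Ioc (1/2) 1 from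
      (Ioc_union_Ioc_eq_Ioc (by norm_num) (by norm_num)).symm]
  have hi1 : IntegrableOn (fun u : ℝ => if u < 1/2 then a else b) (Ioc 0 (1/2)) := by
    apply (integrableOn_const measure_Ioc_lt_top.ne).congr_fun_ae (f := fun _ => a)
    filter_upwards [ae_restrict_mem measurableSet_Ioc, ae_restrict_of_ae ae_ne_half]
      with u hu hne
    exact (if_pos (lt_of_le_of_ne hu.2 hne)).symm
  have hi2 : IntegrableOn (fun u : ℝ => if u < 1/2 then a else b) (Ioc (1/2) 1) := by
    apply (integrableOn_const measure_Ioc_lt_top.ne).congr_fun (f := fun _ => b)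
    · exact fun u hu => (if_neg (not_lt.mpr hu.1.le)).symm
    · exact measurableSet_Ioc
  rw [setIntegral_union (Ioc_disjoint_Ioc_of_le le_rfl) measurableSet_Ioc hi1 hi2]
  have e1 : ∫ u in Ioc (0:ℝ) (1/2), (if u < 1/2 then a else b) = a/2 := by
    rw [setIntegral_congr_ae measurableSet_Ioc (g := fun _ => a)
      (by filter_upwards [ae_ne_half] with u hne hu; exact if_pos (lt_of_le_of_ne hu.2 hne)),
      setIntegral_const, Real.volume_real_Ioc]
    norm_num; ring
  have e2 : ∫ u in Ioc (1/2:ℝ) 1, (if u < 1/2 then a else b) = b/2 := by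
    rw [setIntegral_congr_fun measurableSet_Ioc (g := fun _ => b)
      (fun u hu => if_neg (not_lt.mpr hu.1.le)),
      setIntegral_const, Real.volume_real_Ioc]
    norm_num; ring
  rw [e1, e2]; ring

def Shape46 (x h : ℝ) (f : ℝ → ℝ) : Prop :=
  ∀ s ∈ Icc (0:ℝ) 1, f s = if s < 1/2 then x else if s = 1/2 then h else 2 - x

noncomputable def Aval (ε δ x : ℝ) : ℝ := x/(4+ε) + (2-x)/(2+δ) + (2-x)/(4+δ)
noncomputable def Bval (ε δ x : ℝ) : ℝ := x/(4+ε) + x/(2+ε) + (2-x)/(4+δ)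
noncomputable def Hval (ε δ x h : ℝ) : ℝ := x/(4+ε) + h/(2+ε) + (2-x)/(4+δ)

lemma shape_condDensity (x : ℝ) : Shape46 x (2-x) (condDensity x) := by
  intro s _
  unfold condDensity
  by_cases h1 : s < 1/2
  · simp [h1]
  · by_cases h2 : s = 1/2 <;> simp [h1, h2]

lemma shape_FPpre {ε δ x h : ℝ} (hε : 0 < ε) (hε' : ε ≤ 1/10) (hδ : 0 < δ)
    (hδ' : δ ≤ 1/10) {f : ℝ → ℝ} (hf : Shape46 x h f) :
    ∀ s ∈ Icc (0:ℝ) 1, FPpre ε δ f s =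
      if s < 1/2 then Aval ε δ x else if s = 1/2 then Hval ε δ x h else Bval ε δ x := by
  intro s hs
  obtain ⟨hs0, hs1⟩ := hs
  have h4ε : (0:ℝ) < 4 + ε := by linarith
  have h2ε : (0:ℝ) < 2 + ε := by linarith
  have h4δ : (0:ℝ) < 4 + δ := by linarith
  have h2δ : (0:ℝ) < 2 + δ := by linarith
  -- first argument: s/(4+ε), always in [0,1/2)
  have m1 : s / (4+ε) ∈ Icc (0:ℝ) 1 :=
    ⟨div_nonneg hs0 h4ε.le, by rw [div_le_one h4ε]; linarith⟩
  have v1 : f (s / (4+ε)) = x := by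
    rw [hf _ m1, if_pos (by rw [div_lt_iff₀ h4ε]; linarith)]
  -- third argument: (s+3+δ)/(4+δ), always in (1/2,1]
  have m3 : (s + 3 + δ) / (4+δ) ∈ Icc (0:ℝ) 1 :=
    ⟨div_nonneg (by linarith) h4δ.le, by rw [div_le_one h4δ]; linarith⟩
  have g3 : (1:ℝ)/2 < (s + 3 + δ) / (4+δ) := by rw [lt_div_iff₀ h4δ]; linarith
  have v3 : f ((s + 3 + δ) / (4+δ)) = 2 - x := by
    rw [hf _ m3, if_neg (not_lt.mpr g3.le), if_neg (ne_of_gt g3)]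
  unfold FPpre
  by_cases h1 : s < 1/2
  · rw [if_pos h1, if_pos h1]
    have m2 : ((3+δ)/2 - s) / (2+δ) ∈ Icc (0:ℝ) 1 :=
      ⟨div_nonneg (by linarith) h2δ.le, by rw [div_le_one h2δ]; linarith⟩
    have g2 : (1:ℝ)/2 < ((3+δ)/2 - s) / (2+δ) := by rw [lt_div_iff₀ h2δ]; linarith
    have v2 : f (((3+δ)/2 - s) / (2+δ)) = 2 - x := by
      rw [hf _ m2, if_neg (not_lt.mpr g2.le), if_neg (ne_of_gt g2)]
    rw [v1, v2, v3]; rfl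
  · rw [if_neg h1, if_neg h1]
    have hs2 : 1/2 ≤ s := not_lt.mp h1
    have m2 : ((3+ε)/2 - s) / (2+ε) ∈ Icc (0:ℝ) 1 :=
      ⟨div_nonneg (by linarith) h2ε.le, by rw [div_le_one h2ε]; linarith⟩
    by_cases h2 : s = 1/2
    · rw [if_pos h2]
      have v2 : f (((3+ε)/2 - s) / (2+ε)) = h := by
        have : ((3+ε)/2 - s) / (2+ε) = 1/2 := by rw [h2]; field_simp; ring
        rw [this, hf _ ⟨by norm_num, by norm_num⟩, if_neg (by norm_num), if_pos rfl]
      rw [v1, v2, v3]; rfl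
    · rw [if_neg h2]
      have hs2' : 1/2 < s := lt_of_le_of_ne hs2 (Ne.symm h2)
      have v2 : f (((3+ε)/2 - s) / (2+ε)) = x := by
        rw [hf _ m2, if_pos (by rw [div_lt_iff₀ h2ε]; linarith)]
      rw [v1, v2, v3]; rfl

lemma FPpre_integral {ε δ x h : ℝ} (hε : 0 < ε) (hε' : ε ≤ 1/10) (hδ : 0 < δ)
    (hδ' : δ ≤ 1/10) {f : ℝ → ℝ} (hf : Shape46 x h f) :
    ∫ u in Icc (0:ℝ) 1, FPpre ε δ f u = (Aval ε δ x + Bval ε δ x) / 2 := by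
  rw [setIntegral_congr_ae measurableSet_Icc
    (g := fun u => if u < 1/2 then Aval ε δ x else Bval ε δ x)
    (by
      filter_upwards [ae_ne_half] with u hne hu
      rw [shape_FPpre hε hε' hδ hδ' hf u hu]
      rcases lt_or_gt_of_ne hne with h1 | h1
      · rw [if_pos h1, if_pos h1]
      · rw [if_neg (not_lt.mpr h1.le), if_neg (not_lt.mpr h1.le), if_neg (ne_of_gt h1)])]
  exact stepInt _ _

lemma shape_FPop {ε δ x h : ℝ} (hε : 0 < ε) (hε' : ε ≤ 1/10) (hδ : 0 < δ)
    (hδ' : δ ≤ 1/10) {f : ℝ → ℝ} (hf : Shape46 x h f)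
    (hS : 0 < Aval ε δ x + Bval ε δ x) :
    Shape46 (2 * Aval ε δ x / (Aval ε δ x + Bval ε δ x))
      (2 * Hval ε δ x h / (Aval ε δ x + Bval ε δ x)) (FPop ε δ f) := by
  intro s hs
  unfold FPop
  rw [FPpre_integral hε hε' hδ hδ' hf, shape_FPpre hε hε' hδ hδ' hf s hs]
  have hS' : Aval ε δ x + Bval ε δ x ≠ 0 := ne_of_gt hS
  by_cases h1 : s < 1/2
  · rw [if_pos h1, if_pos h1]; field_simp
  · rw [if_neg h1, if_neg h1]
    by_cases h2 : s = 1/2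
    · rw [if_pos h2, if_pos h2]; field_simp
    · rw [if_neg h2, if_neg h2]; field_simp; ring

noncomputable def Af (p q r x : ℝ) : ℝ := x*p + (2-x)*q + (2-x)*r
noncomputable def Bf (p w r x : ℝ) : ℝ := x*p + x*w + (2-x)*r
noncomputable def Hf (p w r x h : ℝ) : ℝ := x*p + h*w + (2-x)*r
noncomputable def Sf (p q r w x : ℝ) : ℝ := Af p q r x + Bf p w r x

section core
variable {p q r w : ℝ}
  (hp : 10/41 ≤ p) (hp' : p ≤ 1/4) (hq : 10/21 ≤ q) (hq' : q ≤ 1/2)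
  (hr : 10/41 ≤ r) (hr' : r ≤ 1/4) (hw : 10/21 ≤ w) (hw' : w ≤ 1/2)

include hp hp' hq hq' hr hr' hw hw'

lemma S_lb {x : ℝ} (hx0 : 0 ≤ x) (hx2 : x ≤ 2) : 19/10 ≤ Sf p q r w x := by
  simp only [Sf, Af, Bf]
  nlinarith [mul_nonneg hx0 (by linarith : (0:ℝ) ≤ 2*p + w - 24/25),
    mul_nonneg (by linarith : (0:ℝ) ≤ 2 - x) (by linarith : (0:ℝ) ≤ q + 2*r - 24/25)]

lemma S_ub {x : ℝ} (hx0 : 0 ≤ x) (hx2 : x ≤ 2) : Sf p q r w x ≤ 21/10 := by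
  simp only [Sf, Af, Bf]
  nlinarith [mul_nonneg hx0 (by linarith : (0:ℝ) ≤ 1 - (2*p + w)),
    mul_nonneg (by linarith : (0:ℝ) ≤ 2 - x) (by linarith : (0:ℝ) ≤ 1 - (q + 2*r))]

lemma A_nonneg {x : ℝ} (hx0 : 0 ≤ x) (hx2 : x ≤ 2) : 0 ≤ Af p q r x := by
  simp only [Af]
  nlinarith [mul_nonneg hx0 (by linarith : (0:ℝ) ≤ p),
    mul_nonneg (by linarith : (0:ℝ) ≤ 2 - x) (by linarith : (0:ℝ) ≤ q),
    mul_nonneg (by linarith : (0:ℝ) ≤ 2 - x) (by linarith : (0:ℝ) ≤ r)]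

lemma B_nonneg {x : ℝ} (hx0 : 0 ≤ x) (hx2 : x ≤ 2) : 0 ≤ Bf p w r x := by
  simp only [Bf]
  nlinarith [mul_nonneg hx0 (by linarith : (0:ℝ) ≤ p),
    mul_nonneg hx0 (by linarith : (0:ℝ) ≤ w),
    mul_nonneg (by linarith : (0:ℝ) ≤ 2 - x) (by linarith : (0:ℝ) ≤ r)]

lemma S_pos {x : ℝ} (hx0 : 0 ≤ x) (hx2 : x ≤ 2) : 0 < Sf p q r w x :=
  lt_of_lt_of_le (by norm_num) (S_lb hp hp' hq hq' hr hr' hw hw' hx0 hx2)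

lemma xnew_mem {x : ℝ} (hx0 : 0 ≤ x) (hx2 : x ≤ 2) :
    2 * Af p q r x / Sf p q r w x ∈ Icc (0:ℝ) 2 := by
  have hS := S_pos hp hp' hq hq' hr hr' hw hw' hx0 hx2
  have hA := A_nonneg hp hp' hq hq' hr hr' hw hw' hx0 hx2
  have hB := B_nonneg hp hp' hq hq' hr hr' hw hw' hx0 hx2
  constructor
  · positivity
  · rw [div_le_iff₀ hS]
    simp only [Sf] at *
    nlinarith

lemma hnew_mem {x h : ℝ} (hx0 : 0 ≤ x) (hx2 : x ≤ 2) (hh0 : 0 ≤ h) (hh4 : h ≤ 4) :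
    2 * Hf p w r x h / Sf p q r w x ∈ Icc (0:ℝ) 4 := by
  have hS := S_pos hp hp' hq hq' hr hr' hw hw' hx0 hx2
  have hSl := S_lb hp hp' hq hq' hr hr' hw hw' hx0 hx2
  have hH0 : 0 ≤ Hf p w r x h := by
    simp only [Hf]
    nlinarith [mul_nonneg hx0 (by linarith : (0:ℝ) ≤ p),
      mul_nonneg hh0 (by linarith : (0:ℝ) ≤ w),
      mul_nonneg (by linarith : (0:ℝ) ≤ 2 - x) (by linarith : (0:ℝ) ≤ r)]
  have hHu : Hf p w r x h ≤ 5/2 := by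
    simp only [Hf]
    nlinarith [mul_nonneg hx0 (by linarith : (0:ℝ) ≤ 1/4 - p),
      mul_nonneg hh0 (by linarith : (0:ℝ) ≤ 1/2 - w),
      mul_nonneg (by linarith : (0:ℝ) ≤ 2 - x) (by linarith : (0:ℝ) ≤ 1/4 - r)]
  constructor
  · positivity
  · rw [div_le_iff₀ hS]; nlinarith

lemma contract {x y : ℝ} (hx0 : 0 ≤ x) (hx2 : x ≤ 2) (hy0 : 0 ≤ y) (hy2 : y ≤ 2) :
    |2 * Af p q r x / Sf p q r w x - 2 * Af p q r y / Sf p q r w y| ≤ 7/10 * |x - y| := by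
  have hSx := S_pos hp hp' hq hq' hr hr' hw hw' hx0 hx2
  have hSy := S_pos hp hp' hq hq' hr hr' hw hw' hy0 hy2
  have hSxl := S_lb hp hp' hq hq' hr hr' hw hw' hx0 hx2
  have hSyl := S_lb hp hp' hq hq' hr hr' hw hw' hy0 hy2
  have hK : |p*r - (q+r)*(p+w)| ≤ 9/16 := by
    rw [abs_le]
    constructor
    · nlinarith [mul_le_mul (by linarith : q+r ≤ 3/4) (by linarith : p+w ≤ 3/4)
        (by linarith : (0:ℝ) ≤ p+w) (by norm_num : (0:ℝ) ≤ (3:ℝ)/4),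
        mul_nonneg (by linarith : (0:ℝ) ≤ p) (by linarith : (0:ℝ) ≤ r)]
    · nlinarith [mul_le_mul hp' hr' (by linarith : (0:ℝ) ≤ r) (by norm_num : (0:ℝ) ≤ (1:ℝ)/4),
        mul_nonneg (by linarith : (0:ℝ) ≤ q+r) (by linarith : (0:ℝ) ≤ p+w)]
  have hx' : Sf p q r w x ≠ 0 := hSx.ne'
  have hy' : Sf p q r w y ≠ 0 := hSy.ne'
  have hid : 2 * Af p q r x / Sf p q r w x - 2 * Af p q r y / Sf p q r w y
      = 4*(p*r - (q+r)*(p+w))*(x-y) / (Sf p q r w x * Sf p q r w y) := by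
    simp only [Sf, Af, Bf] at hx' hy' ⊢
    rw [div_sub_div _ _ hx' hy']; congr 1
    ring
  rw [hid]
  have habs : |4*(p*r - (q+r)*(p+w))*(x-y)| = 4 * |p*r - (q+r)*(p+w)| * |x-y| := by
    rw [abs_mul, abs_mul, abs_of_nonneg (by norm_num : (0:ℝ) ≤ (4:ℝ))]
  rw [abs_div, habs, abs_of_pos (mul_pos hSx hSy), div_le_iff₀ (mul_pos hSx hSy)]
  have h1 : |p*r - (q+r)*(p+w)| * |x-y| ≤ 9/16 * |x-y| :=
    mul_le_mul_of_nonneg_right hK (abs_nonneg _)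
  have h2 : (19/10 : ℝ) * (19/10) ≤ Sf p q r w x * Sf p q r w y :=
    mul_le_mul hSxl hSyl (by norm_num) (by linarith)
  nlinarith [abs_nonneg (x-y), mul_le_mul_of_nonneg_left h2 (mul_nonneg (by norm_num : (0:ℝ) ≤ 7/10) (abs_nonneg (x-y)))]

lemma B_ub {x : ℝ} (hx0 : 0 ≤ x) (hx2 : x ≤ 2) : Bf p w r x ≤ 3/2 := by
  simp only [Bf]
  nlinarith [mul_nonneg hx0 (by linarith : (0:ℝ) ≤ 1/4 - p),
    mul_nonneg hx0 (by linarith : (0:ℝ) ≤ 1/2 - w),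
    mul_nonneg (by linarith : (0:ℝ) ≤ 2 - x) (by linarith : (0:ℝ) ≤ 1/4 - r)]

lemma two_sub_eq {ν : ℝ} (hν0 : 0 ≤ ν) (hν2 : ν ≤ 2)
    (hfix : 2 * Af p q r ν / Sf p q r w ν = ν) :
    2 - ν = 2 * Bf p w r ν / Sf p q r w ν := by
  have hSν := S_pos hp hp' hq hq' hr hr' hw hw' hν0 hν2
  have hfix' : 2 * Af p q r ν = ν * Sf p q r w ν := (div_eq_iff hSν.ne').mp hfix
  rw [eq_div_iff hSν.ne']
  simp only [Sf] at hfix' ⊢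
  linear_combination hfix'

lemma hstep {x ν h : ℝ} (hx0 : 0 ≤ x) (hx2 : x ≤ 2) (hν0 : 0 ≤ ν) (hν2 : ν ≤ 2)
    (hh0 : 0 ≤ h) (hh4 : h ≤ 4)
    (hfix : 2 * Af p q r ν / Sf p q r w ν = ν) :
    |2 * Hf p w r x h / Sf p q r w x - (2 - ν)|
      ≤ 6/10 * |h - (2 - ν)| + 2 * |x - ν| + 2 * |1 - ν| := by
  have hSx := S_pos hp hp' hq hq' hr hr' hw hw' hx0 hx2
  have hSν := S_pos hp hp' hq hq' hr hr' hw hw' hν0 hν2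
  have hSxl := S_lb hp hp' hq hq' hr hr' hw hw' hx0 hx2
  have hSνl := S_lb hp hp' hq hq' hr hr' hw hw' hν0 hν2
  have hSνu := S_ub hp hp' hq hq' hr hr' hw hw' hν0 hν2
  have hB0 := B_nonneg hp hp' hq hq' hr hr' hw hw' hν0 hν2
  have hBu := B_ub hp hp' hq hq' hr hr' hw hw' hν0 hν2
  set Sx := Sf p q r w x with hSxdef
  set Sν := Sf p q r w ν with hSνdef
  set Bν := Bf p w r ν with hBνdef
  set T1 := Sν * ((x - ν) * (p - r)) with hT1
  set T2 := Sν * (w * (h - (2 - ν))) with hT2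
  set T3 := Sν * (w * (2 - 2*ν)) with hT3
  set T4 := Bν * ((ν - x) * (2*p + w - q - 2*r)) with hT4
  set Nexpr := Hf p w r x h * Sν - Bν * Sx with hNdef
  have hNid : Nexpr = T1 + T2 + T3 + T4 := by
    simp only [hNdef, hT1, hT2, hT3, hT4, hSxdef, hSνdef, hBνdef, Hf, Bf, Sf, Af]
    ring
  have hD : 2 * Hf p w r x h / Sx - (2 - ν) = 2 * Nexpr / (Sx * Sν) := by
    rw [two_sub_eq hp hp' hq hq' hr hr' hw hw' hν0 hν2 hfix, hNdef]
    rw [div_sub_div _ _ hSx.ne' hSν.ne']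
    congr 1
    ring
  have bT1 : |T1| ≤ 21/10 * (|x - ν| * (1/4)) := by
    rw [hT1, abs_mul, abs_mul, abs_of_pos hSν]
    have hpr : |p - r| ≤ 1/4 := abs_le.mpr ⟨by linarith, by linarith⟩
    gcongr
  have bT2 : |T2| ≤ 21/10 * (1/2 * |h - (2 - ν)|) := by
    rw [hT2, abs_mul, abs_mul, abs_of_pos hSν, abs_of_nonneg (by linarith : (0:ℝ) ≤ w)]
    gcongr
  have bT3 : |T3| ≤ 21/10 * (1/2 * (2 * |1 - ν|)) := by
    rw [hT3, abs_mul, abs_mul, abs_of_pos hSν, abs_of_nonneg (by linarith : (0:ℝ) ≤ w),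
      show (2:ℝ) - 2*ν = 2*(1-ν) by ring, abs_mul, abs_two]
    gcongr
  have bT4 : |T4| ≤ 3/2 * (|x - ν| * 1) := by
    rw [hT4, abs_mul, abs_mul, abs_of_nonneg hB0, abs_sub_comm ν x]
    have hc : |2*p + w - q - 2*r| ≤ 1 := abs_le.mpr ⟨by linarith, by linarith⟩
    gcongr
  have hNb : |Nexpr| ≤ 21/40 * |x - ν| + 21/20 * |h - (2 - ν)| + 21/10 * |1 - ν|
      + 3/2 * |x - ν| := by
    rw [hNid]
    have h12 := abs_add_le T1 T2
    have h123 := abs_add_le (T1 + T2) T3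
    have h1234 := abs_add_le (T1 + T2 + T3) T4
    linarith
  rw [hD, abs_div, abs_of_pos (mul_pos hSx hSν),
    show |2 * Nexpr| = 2 * |Nexpr| by rw [abs_mul, abs_two],
    div_le_iff₀ (mul_pos hSx hSν)]
  have hSS : (361/100 : ℝ) ≤ Sx * Sν :=
    le_trans (by norm_num) (mul_le_mul hSxl hSνl (by norm_num) (by linarith))
  have hcombo : (0:ℝ) ≤ 6/10 * |h - (2 - ν)| + 2 * |x - ν| + 2 * |1 - ν| := by positivity
  have hmul := mul_le_mul_of_nonneg_left hSS hcombo
  nlinarith [abs_nonneg (x - ν), abs_nonneg (h - (2 - ν)), abs_nonneg (1 - ν)]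

lemma nu_close {ν θ : ℝ} (hν0 : 0 ≤ ν) (hν2 : ν ≤ 2)
    (hfix : 2 * Af p q r ν / Sf p q r w ν = ν) (hwq : |w - q| ≤ θ) :
    |1 - ν| ≤ 10/3 * θ := by
  have hS1 := S_pos hp hp' hq hq' hr hr' hw hw' (by norm_num : (0:ℝ) ≤ 1) (by norm_num)
  have hS1l := S_lb hp hp' hq hq' hr hr' hw hw' (by norm_num : (0:ℝ) ≤ 1) (by norm_num)
  have hθ : 0 ≤ θ := le_trans (abs_nonneg _) hwq
  have hres : 1 - 2 * Af p q r 1 / Sf p q r w 1 = (w - q) / Sf p q r w 1 := by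
    rw [eq_div_iff hS1.ne', sub_mul, one_mul, div_mul_cancel₀ _ hS1.ne']
    simp only [Sf, Af, Bf]
    ring
  have h1 : |1 - 2 * Af p q r 1 / Sf p q r w 1| ≤ θ := by
    rw [hres, abs_div, abs_of_pos hS1, div_le_iff₀ hS1]
    nlinarith
  have h2 : |2 * Af p q r 1 / Sf p q r w 1 - ν| ≤ 7/10 * |1 - ν| := by
    nth_rewrite 1 [← hfix]
    exact contract hp hp' hq hq' hr hr' hw hw' (by norm_num) (by norm_num) hν0 hν2
  have h3 := abs_sub_le (1:ℝ) (2 * Af p q r 1 / Sf p q r w 1) ν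
  rw [show |(1:ℝ) - ν| = |1 - ν| from rfl] at h3
  linarith [abs_nonneg (1 - ν)]

end core


/-- **Lemma 4.6.** For every `μ > 0` there are `ω > 0` and `N` such that for every density of
the form `x` on `(0,1/2)`, `2-x` on `(1/2,1)` with `x ∈ [0,2]`, every `n ≥ N` and all
parameters `0 < ε, δ < ω`, the `n`-th image under `P_{ε,δ}` is within `μ` (in sup-norm) of
the conditionally invariant density `f_c(·; ε, δ)`. -/
theorem iterates_of_two_piece_densities_converge
    (ν : ℝ → ℝ → ℝ)
    (hν : ∀ ε δ : ℝ, 0 < ε → 0 < δ →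
      ν ε δ ∈ Set.Icc (0 : ℝ) 2 ∧
      (∀ s ∈ Set.Ioo (0 : ℝ) (1 / 2) ∪ Set.Ioo (1 / 2 : ℝ) 1,
        FPop ε δ (condDensity (ν ε δ)) s = condDensity (ν ε δ) s)) :
    ∀ μ : ℝ, 0 < μ → ∃ ω : ℝ, 0 < ω ∧ ∃ N : ℕ,
      ∀ x ∈ Set.Icc (0 : ℝ) 2, ∀ n : ℕ, N ≤ n →
        ∀ ε δ : ℝ, 0 < ε → ε < ω → 0 < δ → δ < ω →
          supNorm01 (fun s =>
            (FPop ε δ)^[n] (condDensity x) s - condDensity (ν ε δ) s) < μ := by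
  intro μ hμ
  set ω : ℝ := min (1/10) (μ/100) with hωdef
  have hω0 : 0 < ω := lt_min (by norm_num) (by positivity)
  refine ⟨ω, hω0, ?_⟩
  -- choose N from the decay of (6+9n)(7/10)^n
  have t1 : Tendsto (fun n : ℕ => (7/10:ℝ)^n) atTop (nhds 0) :=
    tendsto_pow_atTop_nhds_zero_of_lt_one (by norm_num) (by norm_num)
  have t2 : Tendsto (fun n : ℕ => (n:ℝ) * (7/10)^n) atTop (nhds 0) := by
    have hs : Summable (fun n : ℕ => (n:ℝ)^1 * (7/10)^n) :=
      summable_pow_mul_geometric_of_norm_lt_one (k := 1) (r := (7/10:ℝ))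
        (by rw [Real.norm_eq_abs, abs_of_nonneg (by norm_num : (0:ℝ) ≤ 7/10)]; norm_num)
    simpa using hs.tendsto_atTop_zero
  have t3 : Tendsto (fun n : ℕ => (6 + 9*(n:ℝ)) * (7/10)^n) atTop (nhds 0) := by
    have h := (t1.const_mul (6:ℝ)).add (t2.const_mul (9:ℝ))
    simp only [mul_zero, add_zero] at h
    convert h using 2 with n
    ring
  obtain ⟨N, hN⟩ := eventually_atTop.mp
    (t3.eventually_lt_const (by positivity : (0:ℝ) < μ/2))
  refine ⟨N, ?_⟩
  intro x hx n hn ε δ hε0 hεω hδ0 hδω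
  obtain ⟨hνIcc, hνinv⟩ := hν ε δ hε0 hδ0
  set νv : ℝ := ν ε δ with hνvdef
  have hν0 : 0 ≤ νv := hνIcc.1
  have hν2 : νv ≤ 2 := hνIcc.2
  have hε' : ε ≤ 1/10 := le_of_lt (lt_of_lt_of_le hεω (min_le_left _ _))
  have hδ' : δ ≤ 1/10 := le_of_lt (lt_of_lt_of_le hδω (min_le_left _ _))
  have h4ε : (0:ℝ) < 4 + ε := by linarith
  have h2ε : (0:ℝ) < 2 + ε := by linarith
  have h4δ : (0:ℝ) < 4 + δ := by linarith
  have h2δ : (0:ℝ) < 2 + δ := by linarith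
  set p : ℝ := 1/(4+ε) with hpdef
  set w : ℝ := 1/(2+ε) with hwdef
  set q : ℝ := 1/(2+δ) with hqdef
  set r : ℝ := 1/(4+δ) with hrdef
  have hp : 10/41 ≤ p := by
    rw [hpdef, show (10:ℝ)/41 = 1/(41/10) by norm_num]
    exact one_div_le_one_div_of_le h4ε (by linarith)
  have hp' : p ≤ 1/4 := by
    rw [hpdef]; exact one_div_le_one_div_of_le (by norm_num) (by linarith)
  have hw : 10/21 ≤ w := by
    rw [hwdef, show (10:ℝ)/21 = 1/(21/10) by norm_num]
    exact one_div_le_one_div_of_le h2ε (by linarith)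
  have hw' : w ≤ 1/2 := by
    rw [hwdef]; exact one_div_le_one_div_of_le (by norm_num) (by linarith)
  have hq : 10/21 ≤ q := by
    rw [hqdef, show (10:ℝ)/21 = 1/(21/10) by norm_num]
    exact one_div_le_one_div_of_le h2δ (by linarith)
  have hq' : q ≤ 1/2 := by
    rw [hqdef]; exact one_div_le_one_div_of_le (by norm_num) (by linarith)
  have hr : 10/41 ≤ r := by
    rw [hrdef, show (10:ℝ)/41 = 1/(41/10) by norm_num]
    exact one_div_le_one_div_of_le h4δ (by linarith)
  have hr' : r ≤ 1/4 := by
    rw [hrdef]; exact one_div_le_one_div_of_le (by norm_num) (by linarith)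
  -- link between Aval/Bval/Hval and Af/Bf/Hf
  have lA : ∀ y : ℝ, Aval ε δ y = Af p q r y := by
    intro y; simp only [Aval, Af, hpdef, hqdef, hrdef]; ring
  have lB : ∀ y : ℝ, Bval ε δ y = Bf p w r y := by
    intro y; simp only [Bval, Bf, hpdef, hwdef, hrdef]; ring
  have lH : ∀ y z : ℝ, Hval ε δ y z = Hf p w r y z := by
    intro y z; simp only [Hval, Hf, hpdef, hwdef, hrdef]; ring
  have lS : ∀ y : ℝ, Aval ε δ y + Bval ε δ y = Sf p q r w y := by
    intro y; simp only [Sf]; rw [lA, lB]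
  -- the fixed point equation for νv
  have hSν : 0 < Aval ε δ νv + Bval ε δ νv := by
    rw [lS]; exact S_pos hp hp' hq hq' hr hr' hw hw' hν0 hν2
  have hFP := shape_FPop hε0 hε' hδ0 hδ' (shape_condDensity νv) hSν
  have h14 := hFP (1/4) ⟨by norm_num, by norm_num⟩
  rw [if_pos (by norm_num : (1/4:ℝ) < 1/2)] at h14
  have h14' := hνinv (1/4) (Or.inl ⟨by norm_num, by norm_num⟩)
  have hfix : 2 * Af p q r νv / Sf p q r w νv = νv := by
    rw [← lA, ← lS, ← h14, h14', condDensity, if_pos (by norm_num : (1/4:ℝ) < 1/2)]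
  -- closeness of νv to 1
  have hwq : |w - q| ≤ ω/4 := by
    have hid : w - q = (δ - ε)/((2+ε)*(2+δ)) := by
      rw [hwdef, hqdef]; field_simp; ring
    have hde : |δ - ε| ≤ ω := abs_le.mpr ⟨by linarith, by linarith⟩
    have hD : (4:ℝ) ≤ (2+ε)*(2+δ) := by nlinarith
    rw [hid, abs_div, abs_of_pos (by positivity : (0:ℝ) < (2+ε)*(2+δ)),
      div_le_div_iff₀ (by positivity) (by norm_num : (0:ℝ) < 4)]
    nlinarith [abs_nonneg (δ - ε)]
  have hν1 : |1 - νv| ≤ ω := by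
    have := nu_close hp hp' hq hq' hr hr' hw hw' hν0 hν2 hfix hwq
    linarith
  -- main induction
  have key : ∀ m : ℕ, ∃ xm hm, Shape46 xm hm ((FPop ε δ)^[m] (condDensity x)) ∧
      0 ≤ xm ∧ xm ≤ 2 ∧ 0 ≤ hm ∧ hm ≤ 4 ∧ |xm - νv| ≤ 2*(7/10)^m ∧
      |hm - (2 - νv)| ≤ (6 + 9*(m:ℝ))*(7/10)^m + 27*ω := by
    intro m
    induction m with
    | zero =>
      refine ⟨x, 2 - x, ?_, hx.1, hx.2, by linarith [hx.1, hx.2], by linarith [hx.1, hx.2], ?_, ?_⟩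
      · simpa using shape_condDensity x
      · simp only [pow_zero, mul_one]
        exact abs_le.mpr ⟨by linarith [hx.1, hx.2], by linarith [hx.1, hx.2]⟩
      · simp only [Nat.cast_zero, pow_zero, mul_one, mul_zero, add_zero]
        have : |2 - x - (2 - νv)| ≤ 2 := abs_le.mpr ⟨by linarith [hx.1, hx.2], by linarith [hx.1, hx.2]⟩
        linarith
    | succ m ih =>
      obtain ⟨xm, hm, hsh, hx0, hx2, hh0, hh4, hbx, hbh⟩ := ih
      have hSx : 0 < Aval ε δ xm + Bval ε δ xm := by
        rw [lS]; exact S_pos hp hp' hq hq' hr hr' hw hw' hx0 hx2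
      have hFPm := shape_FPop hε0 hε' hδ0 hδ' hsh hSx
      rw [show (FPop ε δ) ((FPop ε δ)^[m] (condDensity x)) = (FPop ε δ)^[m+1] (condDensity x) from (Function.iterate_succ_apply' _ _ _).symm] at hFPm
      rw [lS, lA, lH] at hFPm
      have hxmem := xnew_mem hp hp' hq hq' hr hr' hw hw' hx0 hx2
      have hhmem := hnew_mem hp hp' hq hq' hr hr' hw hw' hx0 hx2 hh0 hh4
      refine ⟨_, _, hFPm, hxmem.1, hxmem.2, hhmem.1, hhmem.2, ?_, ?_⟩
      · calc |2 * Af p q r xm / Sf p q r w xm - νv|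
            = |2 * Af p q r xm / Sf p q r w xm - 2 * Af p q r νv / Sf p q r w νv| := by
              rw [hfix]
          _ ≤ 7/10 * |xm - νv| := contract hp hp' hq hq' hr hr' hw hw' hx0 hx2 hν0 hν2
          _ ≤ 7/10 * (2*(7/10)^m) := by
              exact mul_le_mul_of_nonneg_left hbx (by norm_num)
          _ = 2*(7/10)^(m+1) := by ring
      · have hb := hstep hp hp' hq hq' hr hr' hw hw' hx0 hx2 hν0 hν2 hh0 hh4 hfix
        have hP : (0:ℝ) ≤ (7/10)^m := by positivity
        have hnP : (0:ℝ) ≤ (m:ℝ) * (7/10)^m := by positivity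
        have hps : ((7:ℝ)/10)^(m+1) = (7/10)^m * (7/10) := pow_succ _ _
        push_cast
        nlinarith [abs_nonneg (xm - νv), abs_nonneg (hm - (2 - νv)), abs_nonneg (1 - νv)]
  -- conclude
  obtain ⟨xn, hn', hsh, hx0', hx2', hh0', hh4', hbx, hbh⟩ := key n
  have hbig : ∀ s : Icc (0:ℝ) 1,
      |(FPop ε δ)^[n] (condDensity x) (s:ℝ) - condDensity νv (s:ℝ)|
        ≤ (6 + 9*(n:ℝ))*(7/10)^n + 27*ω := by
    rintro ⟨s, hs⟩
    have hP : (0:ℝ) ≤ (7/10)^n := by positivity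
    have hnP : (0:ℝ) ≤ (n:ℝ) * (7/10)^n := by positivity
    rw [hsh s hs, condDensity]
    by_cases h1 : s < 1/2
    · rw [if_pos h1, if_pos h1]
      nlinarith [hbx, abs_nonneg (xn - νv)]
    · rw [if_neg h1, if_neg h1]
      by_cases h2 : s = 1/2
      · rw [if_pos h2]
        exact hbh
      · rw [if_neg h2, show 2 - xn - (2 - νv) = -(xn - νv) by ring, abs_neg]
        nlinarith [hbx, abs_nonneg (xn - νv)]
  have hne : Nonempty (Icc (0:ℝ) 1) := ⟨⟨0, le_refl 0, by norm_num⟩⟩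
  have hsup : supNorm01 (fun s => (FPop ε δ)^[n] (condDensity x) s - condDensity νv s)
      ≤ (6 + 9*(n:ℝ))*(7/10)^n + 27*ω := by
    apply ciSup_le
    intro s
    exact hbig s
  have hω2 : ω ≤ μ/100 := min_le_right _ _
  calc supNorm01 (fun s => (FPop ε δ)^[n] (condDensity x) s - condDensity νv s)
      ≤ (6 + 9*(n:ℝ))*(7/10)^n + 27*ω := hsup
    _ < μ/2 + 27*(μ/100) := by
        have := hN n hn
        have : (6 + 9*(n:ℝ))*(7/10)^n < μ/2 := this
        nlinarith
    _ ≤ μ := by linarith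
end
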